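/- arXiv:2109.00284 — 9 statements merged into one kernel-verified Lean document; each statement's English description precedes it below -/
import Mathlib

section
/- Let C > 0 and β ∈ ℂ with Re(β) > 0. Let f be holomorphic on the standard quadratic domain R_C and suppose there exist constants K > 0 and α > 0 such that |f(ζ) − ζ − β| ≤ K·exp(−α·Re(ζ)) for all ζ ∈ R_C. Then there exists R > 0 such that the set D := R_C ∩ {ζ : Re(ζ) ≥ R} satisfies f(D) ⊆ D, the sequence of functions ζ ↦ f^∘n(ζ) − n·β converges uniformly on D to a holomorphic function φ : D → ℂ satisfying φ(f(ζ)) = φ(ζ) + β for all ζ ∈ D and φ(ζ) − ζ → 0 uniformly on D as Re(ζ) → +∞, and φ is the unique holomorphic function on D with these last two properties. -/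
open Filter Set
open Complex

/-- The standard quadratic domain `R_C`, i.e. the image of the right half-plane
under `ζ ↦ ζ + C·(ζ+1)^{1/2}` (principal branch). -/
noncomputable def sqd (C : ℝ) : Set ℂ :=
  (fun ζ : ℂ => ζ + (C : ℂ) * (ζ + 1) ^ ((1 : ℂ) / 2)) '' {ζ : ℂ | 0 < ζ.re}

lemma re_cpow_half_pos {z : ℂ} (hz : z ∈ Complex.slitPlane) : 0 < (z ^ ((1:ℂ)/2)).re := by
  have hz0 : z ≠ 0 := Complex.slitPlane_ne_zero hz
  rw [Complex.cpow_def_of_ne_zero hz0, Complex.exp_re]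
  have him : (Complex.log z * ((1:ℂ)/2)).im = z.arg / 2 := by
    simp [Complex.mul_im, Complex.log_im]; ring
  rw [him]
  have harg1 : -Real.pi < z.arg := Complex.neg_pi_lt_arg z
  have harg2 : z.arg < Real.pi :=
    lt_of_le_of_ne (Complex.arg_le_pi z) (Complex.slitPlane_arg_ne_pi hz)
  have : 0 < Real.cos (z.arg / 2) := by
    apply Real.cos_pos_of_mem_Ioo
    constructor <;> [linarith; linarith]
  positivity

lemma sq_cpow_half {z : ℂ} : (z ^ ((1:ℂ)/2))^2 = z := by
  rw [one_div]; exact Complex.cpow_nat_inv_pow z two_ne_zero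

lemma cpow_half_sq {s : ℂ} (hs : 0 < s.re) : (s^2) ^ ((1:ℂ)/2) = s := by
  rw [one_div]; exact_mod_cast Complex.sq_cpow_two_inv hs

lemma mem_sqd_iff {C : ℝ} {z : ℂ} :
    z ∈ sqd C ↔ ∃ s : ℂ, 0 < s.re ∧ 1 < (s^2).re ∧ z = s^2 + C*s - 1 := by
  constructor
  · rintro ⟨u, hu, rfl⟩
    refine ⟨(u+1) ^ ((1:ℂ)/2), ?_, ?_, ?_⟩
    · exact re_cpow_half_pos (Or.inl (by simpa using by linarith [Set.mem_setOf_eq ▸ hu] : (0:ℝ) < (u+1).re))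
    · rw [sq_cpow_half]; simp; exact hu
    · rw [sq_cpow_half]; ring
  · rintro ⟨s, hs, hs2, rfl⟩
    refine ⟨s^2 - 1, ?_, ?_⟩
    · simp only [Set.mem_setOf_eq, Complex.sub_re, Complex.one_re]; linarith
    · show s^2 - 1 + (C:ℂ) * (s^2 - 1 + 1) ^ ((1:ℂ)/2) = s^2 + C*s - 1
      have : (s^2 - 1 + 1) = s^2 := by ring
      rw [this, cpow_half_sq hs]; ring

lemma isOpen_sqd {C : ℝ} (hC : 0 < C) : IsOpen (sqd C) := by
  have key : sqd C = {z : ℂ | 0 < ((z + (1 + C^2/4)) ^ ((1:ℂ)/2) - C/2).re ∧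
      1 < (((z + (1 + C^2/4)) ^ ((1:ℂ)/2) - C/2)^2).re} := by
    ext z
    rw [mem_sqd_iff]
    constructor
    · rintro ⟨s, hs, hs2, rfl⟩
      have hm : (s^2 + C*s - 1 + (1 + (C:ℂ)^2/4)) = (s + C/2)^2 := by ring
      have hmre : 0 < (s + (C:ℂ)/2).re := by
        simp only [Complex.add_re, Complex.div_re]
        simp [Complex.ofReal_re]
        positivity
      simp only [Set.mem_setOf_eq]
      rw [hm, cpow_half_sq hmre]
      constructor
      · simpa using hs
      · have : (s + (C:ℂ)/2 - C/2) = s := by ring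
        rw [this]; exact hs2
    · rintro ⟨h1, h2⟩
      set s := (z + (1 + (C:ℂ)^2/4)) ^ ((1:ℂ)/2) - C/2 with hsdef
      refine ⟨s, h1, h2, ?_⟩
      have hsq : (s + (C:ℂ)/2)^2 = z + (1 + C^2/4) := by
        rw [hsdef]; rw [sub_add_cancel]; exact sq_cpow_half
      have : z = (s + (C:ℂ)/2)^2 - (1 + C^2/4) := by rw [hsq]; ring
      rw [this]; ring
  rw [key]
  have hcont : ∀ z : ℂ, (0 < ((z + (1 + (C:ℂ)^2/4)) ^ ((1:ℂ)/2) - C/2).re ∧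
      1 < (((z + (1 + (C:ℂ)^2/4)) ^ ((1:ℂ)/2) - C/2)^2).re) →
      ContinuousAt (fun w : ℂ => (w + (1 + (C:ℂ)^2/4)) ^ ((1:ℂ)/2) - (C:ℂ)/2) z := by
    intro z hz
    apply ContinuousAt.sub _ continuousAt_const
    have hbase : (z + (1 + (C:ℂ)^2/4)) ∈ Complex.slitPlane := by
      set s := (z + (1 + (C:ℂ)^2/4)) ^ ((1:ℂ)/2) - C/2 with hsdef
      have hsq : (s + (C:ℂ)/2)^2 = z + (1 + C^2/4) := by
        rw [hsdef]; rw [sub_add_cancel]; exact sq_cpow_half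
      rw [← hsq]
      rw [Complex.mem_slitPlane_iff]
      left
      have hre : ((s + (C:ℂ)/2)^2).re = (s^2).re + C * s.re + C^2/4 := by
        rw [show (s + (C:ℂ)/2)^2 = s^2 + (C:ℂ)*s + (((C^2/4 : ℝ)) : ℂ) by push_cast; ring]
        simp [Complex.add_re, Complex.mul_re, Complex.ofReal_re, Complex.ofReal_im, ← Complex.ofReal_pow]
      rw [hre]
      have h1 := hz.1
      have h2 := hz.2
      nlinarith [hC]
    have hadd : ContinuousAt (fun w : ℂ => w + (1 + (C:ℂ)^2/4)) z := by fun_prop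
    exact hadd.cpow continuousAt_const hbase
  rw [isOpen_iff_mem_nhds]
  intro z hz
  have hc := hcont z hz
  have hre : ContinuousAt (fun w : ℂ => ((w + (1 + (C:ℂ)^2/4)) ^ ((1:ℂ)/2) - (C:ℂ)/2).re) z :=
    (Complex.continuous_re.continuousAt).comp hc
  have hre2 : ContinuousAt (fun w : ℂ => (((w + (1 + (C:ℂ)^2/4)) ^ ((1:ℂ)/2) - (C:ℂ)/2)^2).re) z :=
    (Complex.continuous_re.continuousAt).comp ((hc.pow 2))
  have e1 := hre.eventually_mem (Ioi_mem_nhds hz.1)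
  have e2 := hre2.eventually_mem (Ioi_mem_nhds hz.2)
  filter_upwards [e1, e2] with w h1 h2
  exact ⟨h1, h2⟩

lemma step_mem {C : ℝ} (hC : 0 < C) {ζ w : ℂ} (hζ : ζ ∈ sqd C)
    {u₀ W₀ : ℝ} (hu₀ : 0 < u₀) (hW₀ : 0 < W₀)
    (hw : ‖w‖ ≤ W₀) (hwre : u₀ ≤ w.re)
    (hre : (W₀ + 1 + C*W₀/u₀ + C)^2 ≤ ζ.re) : ζ + w ∈ sqd C := by
  obtain ⟨s, hs, hs2, hζeq⟩ := mem_sqd_iff.mp hζ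
  obtain ⟨a, hadef⟩ : ∃ a : ℝ, a = s.re := ⟨_, rfl⟩
  rw [← hadef] at hs
  have hs2re : (s^2).re = a^2 - s.im^2 := by rw [sq, Complex.mul_re, ← hadef]; ring
  have ha1 : 1 < a := by nlinarith [hs2, hs]
  -- a is large
  have hA : W₀ + 1 + C*W₀/u₀ ≤ a := by
    have hζre : ζ.re = (s^2).re + C * a - 1 := by
      rw [hζeq]; simp [Complex.add_re, Complex.sub_re, Complex.mul_re, Complex.ofReal_re,
        Complex.ofReal_im, Complex.one_re, ← hadef]
    have h1 : ζ.re ≤ (a + C)^2 := by nlinarith [hs2re, sq_nonneg s.im]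
    nlinarith [hre, h1, hC, hu₀, hW₀, div_nonneg (mul_nonneg hC.le hW₀.le) hu₀.le]
  have hAu : C * W₀ ≤ a * u₀ := by
    have h1 : C*W₀/u₀ ≤ a := by nlinarith [hA, hW₀]
    calc C * W₀ = (C*W₀/u₀) * u₀ := by field_simp
    _ ≤ a * u₀ := by nlinarith
  have haW : W₀ + 1 ≤ a := by
    nlinarith [hA, div_nonneg (mul_nonneg hC.le hW₀.le) hu₀.le]
  obtain ⟨m, hmdef⟩ : ∃ m : ℂ, m = s + (C:ℂ)/2 := ⟨_, rfl⟩
  have hmre : m.re = a + C/2 := by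
    rw [hmdef]; simp [Complex.add_re, Complex.ofReal_re, ← hadef]
  have hm2re : (m^2).re = (s^2).re + C * a + C^2/4 := by
    have h : m^2 = s^2 + (C:ℂ)*s + (((C^2/4 : ℝ)) : ℂ) := by rw [hmdef]; push_cast; ring
    rw [h]
    simp [Complex.add_re, Complex.mul_re, Complex.ofReal_re, Complex.ofReal_im,
      ← Complex.ofReal_pow, ← hadef]
  have hz0re : 0 < (m^2 + w).re := by
    have : (m^2 + w).re = (m^2).re + w.re := by simp [Complex.add_re]
    rw [this, hm2re]; nlinarith
  obtain ⟨q, hqdef⟩ : ∃ q : ℂ, q = (m^2 + w) ^ ((1:ℂ)/2) := ⟨_, rfl⟩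
  have hq2 : q^2 = m^2 + w := by rw [hqdef]; exact sq_cpow_half
  have hqre : 0 < q.re := hqdef ▸ re_cpow_half_pos (Or.inl hz0re)
  have hprod : ‖q - m‖ * ‖q + m‖ = ‖w‖ := by
    rw [← norm_mul]; congr 1; linear_combination hq2
  have hqm_le : m.re ≤ ‖q + m‖ := by
    have h1 : (q + m).re ≤ ‖q + m‖ := Complex.re_le_norm (q + m)
    have h2 : (q + m).re = q.re + m.re := by simp [Complex.add_re]
    linarith
  have hmre_pos : 0 < m.re := by rw [hmre]; linarith
  have hqm : ‖q - m‖ * a ≤ W₀ := by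
    have h1 : ‖q - m‖ * a ≤ ‖q - m‖ * ‖q + m‖ := by
      apply mul_le_mul_of_nonneg_left _ (norm_nonneg _)
      rw [hmre] at hqm_le; linarith
    linarith [hprod ▸ h1, hw]
  have habs : |(q - m).re| ≤ ‖q - m‖ := Complex.abs_re_le_norm (q - m)
  have hsubre : (q - m).re = q.re - m.re := by simp [Complex.sub_re]
  rw [hsubre] at habs
  rw [abs_le] at habs
  have hqmnn : 0 ≤ ‖q - m‖ := norm_nonneg _
  obtain ⟨t, htdef⟩ : ∃ t : ℂ, t = q - (C:ℂ)/2 := ⟨_, rfl⟩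
  have htre : t.re = q.re - C/2 := by rw [htdef]; simp [Complex.sub_re, Complex.ofReal_re]
  have htsq : t^2 = s^2 + (C:ℂ)*s + w - (C:ℂ)*t := by
    rw [htdef]
    linear_combination hq2 + (m + s + (C:ℂ)/2) * hmdef
  rw [mem_sqd_iff]
  refine ⟨t, ?_, ?_, ?_⟩
  · -- 0 < t.re
    rw [htre]
    have h1 : ‖q - m‖ * 1 ≤ ‖q - m‖ * a := mul_le_mul_of_nonneg_left ha1.le hqmnn
    linarith [habs.1, hqm, haW, hmre, h1]
  · -- 1 < (t^2).re
    have ht2re : (t^2).re = (s^2).re + C * a + w.re - C * t.re := by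
      rw [htsq]
      simp [Complex.add_re, Complex.sub_re, Complex.mul_re, Complex.ofReal_re,
        Complex.ofReal_im, ← hadef]
    rw [ht2re, htre]
    -- need : C*(q.re - C/2 - a) = C*(q.re - m.re) ≤ C*‖q-m‖ ≤ C*W₀/a ≤ u₀ ≤ w.re
    have hann : (0:ℝ) ≤ a := by linarith
    have hkey : C * (q.re - m.re) * a ≤ C * W₀ := by
      have hh := mul_le_mul_of_nonneg_left habs.2 (mul_nonneg hC.le hann)
      have hh2 := mul_le_mul_of_nonneg_left hqm hC.le
      linarith [hh, hh2]
    rw [hmre] at hkey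
    have hX : C * (q.re - (a + C/2)) * a ≤ u₀ * a := by linarith [hkey, hAu]
    have hX2 : C * (q.re - (a + C/2)) ≤ u₀ :=
      le_of_mul_le_mul_right hX (by linarith : (0:ℝ) < a)
    linarith [hX2, hwre, hs2]
  · -- ζ + w = t^2 + C*t - 1
    rw [hζeq]
    linear_combination -htsq

lemma tuo_add_id {F : ℕ → ℂ → ℂ} {G : ℂ → ℂ} {s : Set ℂ}
    (h : TendstoUniformlyOn F G atTop s) :
    TendstoUniformlyOn (fun n x => x + F n x) (fun x => x + G x) atTop s := by
  rw [Metric.tendstoUniformlyOn_iff] at h ⊢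
  intro ε hε
  filter_upwards [h ε hε] with n hn x hx
  simpa [dist_add_left] using hn x hx

theorem linearization_of_exponentially_close_to_translation
    (C : ℝ) (hC : 0 < C) (β : ℂ) (hβ : 0 < β.re)
    (f : ℂ → ℂ) (hf : DifferentiableOn ℂ f (sqd C))
    (K α : ℝ) (hK : 0 < K) (hα : 0 < α)
    (hbound : ∀ ζ ∈ sqd C, ‖f ζ - ζ - β‖ ≤ K * Real.exp (-α * ζ.re)) :
    ∃ R > 0,
      Set.MapsTo f (sqd C ∩ {ζ : ℂ | R ≤ ζ.re}) (sqd C ∩ {ζ : ℂ | R ≤ ζ.re}) ∧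
      ∃ φ : ℂ → ℂ,
        TendstoUniformlyOn (fun (n : ℕ) (ζ : ℂ) => f^[n] ζ - (n : ℂ) * β) φ atTop
          (sqd C ∩ {ζ : ℂ | R ≤ ζ.re}) ∧
        DifferentiableOn ℂ φ (sqd C ∩ {ζ : ℂ | R ≤ ζ.re}) ∧
        (∀ ζ ∈ sqd C ∩ {ζ : ℂ | R ≤ ζ.re}, φ (f ζ) = φ ζ + β) ∧
        (∀ δ > 0, ∃ R' : ℝ, ∀ ζ ∈ sqd C ∩ {ζ : ℂ | R ≤ ζ.re}, R' ≤ ζ.re → ‖φ ζ - ζ‖ ≤ δ) ∧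
        (∀ ψ : ℂ → ℂ, DifferentiableOn ℂ ψ (sqd C ∩ {ζ : ℂ | R ≤ ζ.re}) →
          (∀ ζ ∈ sqd C ∩ {ζ : ℂ | R ≤ ζ.re}, ψ (f ζ) = ψ ζ + β) →
          (∀ δ > 0, ∃ R' : ℝ, ∀ ζ ∈ sqd C ∩ {ζ : ℂ | R ≤ ζ.re}, R' ≤ ζ.re → ‖ψ ζ - ζ‖ ≤ δ) →
          Set.EqOn ψ φ (sqd C ∩ {ζ : ℂ | R ≤ ζ.re})) := by
  -- exponential decay helper
  have hexp : ∀ K' > (0:ℝ), ∀ ε > (0:ℝ), ∀ x : ℝ, Real.log (K'/ε)/α ≤ x →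
      K' * Real.exp (-α * x) ≤ ε := by
    intro K' hK' ε hε x hx
    have h1 : Real.log (K'/ε) ≤ α * x := by
      rw [div_le_iff₀ hα] at hx; linarith
    have h2 : Real.exp (-α * x) ≤ ε / K' := by
      have : (-α) * x ≤ Real.log (ε/K') := by
        rw [show ε/K' = (K'/ε)⁻¹ by field_simp, Real.log_inv]; linarith
      calc Real.exp (-α * x) ≤ Real.exp (Real.log (ε/K')) := Real.exp_le_exp.mpr this
      _ = ε / K' := Real.exp_log (by positivity)
    calc K' * Real.exp (-α * x) ≤ K' * (ε / K') := by
          exact mul_le_mul_of_nonneg_left h2 hK'.le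
    _ = ε := by field_simp
  set u₀ : ℝ := β.re / 2 with hu₀def
  have hu₀ : 0 < u₀ := by rw [hu₀def]; linarith
  set W₀ : ℝ := ‖β‖ + u₀ with hW₀def
  have hW₀ : 0 < W₀ := by
    have := norm_nonneg β; rw [hW₀def]; linarith
  set A₀ : ℝ := (W₀ + 1 + C*W₀/u₀ + C)^2 with hA₀def
  set R₀ : ℝ := max (max A₀ 1) (Real.log (K/u₀) / α) with hR₀def
  have hR₀1 : (1:ℝ) ≤ R₀ := le_trans (le_max_right _ _) (le_max_left _ _)
  -- one-step lemma
  have hstep : ∀ ζ ∈ sqd C, R₀ ≤ ζ.re →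
      f ζ ∈ sqd C ∧ ζ.re + u₀ ≤ (f ζ).re := by
    intro ζ hζ hre
    have hb : ‖f ζ - ζ - β‖ ≤ u₀ := by
      refine le_trans (hbound ζ hζ) (hexp K hK u₀ hu₀ ζ.re ?_)
      exact le_trans (le_trans (le_max_right _ _) (le_refl R₀)) hre
    set w : ℂ := f ζ - ζ with hwdef
    have hwβ : w - β = f ζ - ζ - β := by rw [hwdef]
    have hw : ‖w‖ ≤ W₀ := by
      calc ‖w‖ = ‖β + (w - β)‖ := by ring_nf
      _ ≤ ‖β‖ + ‖w - β‖ := norm_add_le _ _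
      _ ≤ ‖β‖ + u₀ := by rw [hwβ]; linarith
      _ = W₀ := hW₀def.symm
    have hwre : u₀ ≤ w.re := by
      have h1 : |(w - β).re| ≤ ‖w - β‖ := Complex.abs_re_le_norm _
      rw [abs_le] at h1
      have h2 : (w - β).re = w.re - β.re := by simp [Complex.sub_re]
      rw [h2] at h1
      have h3 : -(u₀) ≤ w.re - β.re := by linarith [h1.1, hb]
      have h4 : u₀ = β.re / 2 := hu₀def
      linarith
    have hmem : ζ + w ∈ sqd C := by
      apply step_mem hC hζ hu₀ hW₀ hw hwre
      rw [hA₀def] at *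
      exact le_trans (le_trans (le_max_left _ _) (le_max_left _ _)) hre
    have hfζ : ζ + w = f ζ := by rw [hwdef]; ring
    constructor
    · rw [← hfζ]; exact hmem
    · have : (f ζ).re = ζ.re + w.re := by rw [← hfζ]; simp [Complex.add_re]
      linarith
  -- iterates
  have hiter : ∀ ζ, ζ ∈ sqd C → R₀ ≤ ζ.re → ∀ n : ℕ,
      f^[n] ζ ∈ sqd C ∧ ζ.re + n * u₀ ≤ (f^[n] ζ).re := by
    intro ζ hζ hre n
    induction n with
    | zero =>
      constructor
      · simpa using hζ
      · simp
    | succ n ih =>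
      have hnn : (0:ℝ) ≤ (n:ℝ) * u₀ := by positivity
      have hre' : R₀ ≤ (f^[n] ζ).re := by linarith [ih.2]
      obtain ⟨h1, h2⟩ := hstep (f^[n] ζ) ih.1 hre'
      rw [Function.iterate_succ_apply']
      refine ⟨h1, ?_⟩
      push_cast
      linarith [ih.2]
  set U : Set ℂ := sqd C ∩ {ζ : ℂ | R₀ < ζ.re} with hUdef
  have hUopen : IsOpen U := (isOpen_sqd hC).inter (isOpen_Ioi.preimage Complex.continuous_re)
  have hUsqd : ∀ ζ ∈ U, ζ ∈ sqd C ∧ R₀ ≤ ζ.re := fun ζ hζ => ⟨hζ.1, le_of_lt hζ.2⟩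
  -- the increments
  set d : ℕ → ℂ → ℂ := fun k ζ => f (f^[k] ζ) - f^[k] ζ - β with hddef
  have htele : ∀ (n : ℕ) (ζ : ℂ), f^[n] ζ - (n:ℂ) * β = ζ + ∑ k ∈ Finset.range n, d k ζ := by
    intro n ζ
    have h1 : ∀ k, d k ζ = ((fun j => f^[j] ζ) (k+1) - (fun j => f^[j] ζ) k) - β := by
      intro k
      simp only [hddef, Function.iterate_succ_apply']
    calc f^[n] ζ - (n:ℂ) * β
        = ζ + ((f^[n] ζ - f^[0] ζ) - n • β) := by
          simp [Function.iterate_zero_apply, nsmul_eq_mul]; ring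
    _ = ζ + (∑ k ∈ Finset.range n, (((fun j => f^[j] ζ) (k+1) - (fun j => f^[j] ζ) k) - β)) := by
          rw [Finset.sum_sub_distrib, Finset.sum_range_sub (fun j => f^[j] ζ),
            Finset.sum_const, Finset.card_range]
    _ = ζ + ∑ k ∈ Finset.range n, d k ζ := by
          congr 1; exact (Finset.sum_congr rfl fun k _ => (h1 k).symm)
  set r : ℝ := Real.exp (-(α * u₀)) with hrdef
  have hr0 : 0 < r := Real.exp_pos _
  have hr1 : r < 1 := by
    rw [hrdef, show (1:ℝ) = Real.exp 0 by rw [Real.exp_zero]]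
    exact Real.exp_lt_exp.mpr (neg_lt_zero.mpr (mul_pos hα hu₀))
  have hdb : ∀ (k : ℕ) (ζ : ℂ), ζ ∈ sqd C → R₀ ≤ ζ.re →
      ‖d k ζ‖ ≤ (K * Real.exp (-α * ζ.re)) * r^k := by
    intro k ζ hζ hre
    obtain ⟨h1, h2⟩ := hiter ζ hζ hre k
    have hb := hbound (f^[k] ζ) h1
    have h3 : Real.exp (-α * (f^[k] ζ).re) ≤ Real.exp (-α * ζ.re) * r^k := by
      rw [hrdef, ← Real.exp_nat_mul, ← Real.exp_add]
      apply Real.exp_le_exp.mpr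
      have : -α * (ζ.re + k * u₀) = -α * ζ.re + k * -(α * u₀) := by ring
      nlinarith [h2, hα]
    calc ‖d k ζ‖ ≤ K * Real.exp (-α * (f^[k] ζ).re) := hb
    _ ≤ (K * Real.exp (-α * ζ.re)) * r^k := by
        rw [mul_assoc]
        exact mul_le_mul_of_nonneg_left h3 hK.le
  have hsum : Summable (fun k : ℕ => (K * Real.exp (-α * R₀)) * r^k) :=
    (summable_geometric_of_lt_one hr0.le hr1).mul_left _
  have hdbU : ∀ (k : ℕ) (ζ : ℂ), ζ ∈ U → ‖d k ζ‖ ≤ (K * Real.exp (-α * R₀)) * r^k := by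
    intro k ζ hζ
    obtain ⟨h1, h2⟩ := hUsqd ζ hζ
    refine le_trans (hdb k ζ h1 h2) ?_
    have : Real.exp (-α * ζ.re) ≤ Real.exp (-α * R₀) :=
      Real.exp_le_exp.mpr (by nlinarith)
    have hrk : (0:ℝ) ≤ r^k := by positivity
    exact mul_le_mul_of_nonneg_right (mul_le_mul_of_nonneg_left this hK.le) hrk
  set φ : ℂ → ℂ := fun ζ => ζ + ∑' k, d k ζ with hφdef
  have hunif : TendstoUniformlyOn (fun (n : ℕ) (ζ : ℂ) => f^[n] ζ - (n : ℂ) * β) φ atTop U := by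
    have h0 := tendstoUniformlyOn_tsum_nat hsum (f := d) (s := U) hdbU
    have h1 := tuo_add_id h0
    have hfun : (fun (n:ℕ) (ζ:ℂ) => f^[n] ζ - (n:ℂ)*β)
        = fun (n:ℕ) (ζ:ℂ) => ζ + ∑ k ∈ Finset.range n, d k ζ := by
      funext n ζ; exact htele n ζ
    rw [hfun, hφdef]
    exact h1
  -- summability of increments pointwise, and asymptotics
  have hsummU : ∀ ζ ∈ U, Summable (fun k => d k ζ) := by
    intro ζ hζ
    apply Summable.of_norm
    apply Summable.of_nonneg_of_le (fun k => norm_nonneg _) (fun k => hdbU k ζ hζ) hsum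
  have hasym : ∀ ζ ∈ U, ‖φ ζ - ζ‖ ≤ (K * (1-r)⁻¹) * Real.exp (-α * ζ.re) := by
    intro ζ hζ
    obtain ⟨h1, h2⟩ := hUsqd ζ hζ
    have he : φ ζ - ζ = ∑' k, d k ζ := by rw [hφdef]; ring
    rw [he]
    have hsnorm : Summable (fun k => ‖d k ζ‖) :=
      Summable.of_nonneg_of_le (fun k => norm_nonneg _) (fun k => hdbU k ζ hζ) hsum
    have hsgeo : Summable (fun k : ℕ => (K * Real.exp (-α * ζ.re)) * r^k) :=
      (summable_geometric_of_lt_one hr0.le hr1).mul_left _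
    calc ‖∑' k, d k ζ‖ ≤ ∑' k, ‖d k ζ‖ := norm_tsum_le_tsum_norm hsnorm
    _ ≤ ∑' k, (K * Real.exp (-α * ζ.re)) * r^k :=
        Summable.tsum_le_tsum (fun k => hdb k ζ h1 h2) hsnorm hsgeo
    _ = (K * Real.exp (-α * ζ.re)) * (1-r)⁻¹ := by
        rw [tsum_mul_left, tsum_geometric_of_lt_one hr0.le hr1]
    _ = (K * (1-r)⁻¹) * Real.exp (-α * ζ.re) := by ring
  set R : ℝ := R₀ + 1 with hRdef
  have hR : 0 < R := by linarith
  set D : Set ℂ := sqd C ∩ {ζ : ℂ | R ≤ ζ.re} with hDdef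
  have hDU : D ⊆ U := by
    rintro ζ ⟨h1, h2⟩
    exact ⟨h1, by simp only [Set.mem_setOf_eq] at h2 ⊢; linarith⟩
  have hDsqd : ∀ ζ ∈ D, ζ ∈ sqd C ∧ R₀ ≤ ζ.re := by
    rintro ζ ⟨h1, h2⟩
    simp only [Set.mem_setOf_eq] at h2
    exact ⟨h1, by linarith⟩
  have hmapsD : Set.MapsTo f D D := by
    rintro ζ hζ
    obtain ⟨h1, h2⟩ := hDsqd ζ hζ
    obtain ⟨h3, h4⟩ := hstep ζ h1 h2
    have h5 : R ≤ ζ.re := hζ.2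
    exact ⟨h3, by simp only [Set.mem_setOf_eq]; linarith⟩
  -- iterates stay in D
  have hiterD : ∀ ζ ∈ D, ∀ n : ℕ, f^[n] ζ ∈ D ∧ ζ.re + n * u₀ ≤ (f^[n] ζ).re := by
    intro ζ hζ n
    obtain ⟨h1, h2⟩ := hDsqd ζ hζ
    obtain ⟨h3, h4⟩ := hiter ζ h1 h2 n
    have h5 : R ≤ ζ.re := hζ.2
    have hnn : (0:ℝ) ≤ (n:ℝ) * u₀ := by positivity
    exact ⟨⟨h3, by simp only [Set.mem_setOf_eq]; linarith⟩, h4⟩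
  -- differentiability of iterates on U
  have hmapsU : Set.MapsTo f U U := by
    rintro ζ hζ
    obtain ⟨h1, h2⟩ := hUsqd ζ hζ
    obtain ⟨h3, h4⟩ := hstep ζ h1 h2
    exact ⟨h3, by simp only [Set.mem_setOf_eq]; have := hζ.2; simp only [Set.mem_setOf_eq] at this; linarith⟩
  have hUsub : U ⊆ sqd C := fun ζ hζ => hζ.1
  have hiterdiff : ∀ n : ℕ, DifferentiableOn ℂ (f^[n]) U := by
    intro n
    induction n with
    | zero => simpa using differentiableOn_id
    | succ n ih =>
      rw [Function.iterate_succ']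
      apply DifferentiableOn.comp hf ih
      intro ζ hζ
      obtain ⟨h1, h2⟩ := hUsqd ζ hζ
      exact (hiter ζ h1 h2 n).1
  have hFdiff : ∀ n : ℕ, DifferentiableOn ℂ (fun ζ => f^[n] ζ - (n:ℂ)*β) U := by
    intro n
    exact (hiterdiff n).sub (differentiableOn_const _)
  have hφdiff : DifferentiableOn ℂ φ U :=
    (hunif.tendstoLocallyUniformlyOn).differentiableOn
      (Filter.Eventually.of_forall hFdiff) hUopen
  -- functional equation
  have hfeq : ∀ ζ ∈ D, φ (f ζ) = φ ζ + β := by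
    intro ζ hζ
    have hζU : ζ ∈ U := hDU hζ
    have hfζU : f ζ ∈ U := hDU (hmapsD hζ)
    have ha := hunif.tendsto_at hζU
    have hb := hunif.tendsto_at hfζU
    have hd : Filter.Tendsto (fun n : ℕ => f^[n] (f ζ) - (n:ℂ) * β) atTop (nhds (φ ζ + β)) := by
      have h5 := (ha.comp (Filter.tendsto_add_atTop_nat 1)).add
        (tendsto_const_nhds : Filter.Tendsto (fun _ : ℕ => β) atTop (nhds β))
      refine h5.congr fun n => ?_
      show f^[n+1] ζ - ((n+1 : ℕ):ℂ) * β + β = f^[n] (f ζ) - (n:ℂ) * β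
      rw [← Function.iterate_succ_apply]
      push_cast
      ring
    exact tendsto_nhds_unique hb hd
  -- asymptotics on D
  have hasymD : ∀ δ > (0:ℝ), ∃ R' : ℝ, ∀ ζ ∈ D, R' ≤ ζ.re → ‖φ ζ - ζ‖ ≤ δ := by
    intro δ hδ
    have h1r : (0:ℝ) < 1 - r := by linarith
    have hK' : (0:ℝ) < K * (1-r)⁻¹ := mul_pos hK (inv_pos.mpr h1r)
    refine ⟨Real.log ((K * (1-r)⁻¹)/δ)/α, fun ζ hζ hre => ?_⟩
    calc ‖φ ζ - ζ‖ ≤ (K * (1-r)⁻¹) * Real.exp (-α * ζ.re) := hasym ζ (hDU hζ)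
    _ ≤ δ := hexp _ hK' δ hδ ζ.re hre
  refine ⟨R, hR, hmapsD, φ, hunif.mono hDU, hφdiff.mono hDU, hfeq, hasymD, ?_⟩
  -- uniqueness
  intro ψ hψdiff hψeq hψasym ζ hζ
  have key : ∀ δ > (0:ℝ), ‖ψ ζ - φ ζ‖ ≤ δ := by
    intro δ hδ
    obtain ⟨R₁, hR₁⟩ := hψasym (δ/2) (by linarith)
    obtain ⟨R₂, hR₂⟩ := hasymD (δ/2) (by linarith)
    obtain ⟨n, hn⟩ := exists_nat_ge ((max R₁ R₂ - ζ.re)/u₀)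
    have hconst : ∀ m : ℕ, ψ (f^[m] ζ) - φ (f^[m] ζ) = ψ ζ - φ ζ := by
      intro m
      induction m with
      | zero => simp
      | succ m ih =>
        rw [Function.iterate_succ_apply']
        have hm : f^[m] ζ ∈ D := (hiterD ζ hζ m).1
        rw [hψeq _ hm, hfeq _ hm]
        rw [← ih]
        ring
    obtain ⟨hmem, hregrow⟩ := hiterD ζ hζ n
    have hbig : max R₁ R₂ ≤ (f^[n] ζ).re := by
      have h1 : max R₁ R₂ - ζ.re ≤ n * u₀ := by
        rw [div_le_iff₀ hu₀] at hn
        linarith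
      linarith
    have h1 := hR₁ (f^[n] ζ) hmem (le_trans (le_max_left _ _) hbig)
    have h2 := hR₂ (f^[n] ζ) hmem (le_trans (le_max_right _ _) hbig)
    calc ‖ψ ζ - φ ζ‖ = ‖ψ (f^[n] ζ) - φ (f^[n] ζ)‖ := by rw [hconst n]
    _ = ‖(ψ (f^[n] ζ) - f^[n] ζ) - (φ (f^[n] ζ) - f^[n] ζ)‖ := by congr 1; ring
    _ ≤ ‖ψ (f^[n] ζ) - f^[n] ζ‖ + ‖φ (f^[n] ζ) - f^[n] ζ‖ := norm_sub_le _ _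
    _ ≤ δ/2 + δ/2 := add_le_add h1 h2
    _ = δ := by ring
  have : ‖ψ ζ - φ ζ‖ ≤ 0 := by
    refine le_of_forall_pos_le_add fun ε hε => ?_
    simpa using key ε hε
  have : ψ ζ - φ ζ = 0 := norm_le_zero_iff.mp this
  exact sub_eq_zero.mp this
end

section
/- Let β ∈ ℂ with Re(β) > 0, ε > 0, k ∈ ℕ, and R > exp^∘k(0) with M_{ε,k}(R) < Re(β). Let D ⊆ ℂ be an open set with Re(ζ) ≥ R for all ζ ∈ D, and let f : D → ℂ be holomorphic with f(D) ⊆ D and |f(ζ) − (ζ + β)| ≤ M_{ε,k}(Re(ζ)) for all ζ ∈ D. Then the sequence of functions φ_n(ζ) := f^∘n(ζ) − n·β converges uniformly on D to a holomorphic function φ : D → ℂ which satisfies φ(f(ζ)) = φ(ζ) + β for all ζ ∈ D. -/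
/-!
Since `M_{ε,k}` is decreasing, `Re f(ζ) ≥ Re ζ + c` on `D` with `c = Re β - M_{ε,k}(R) > 0`, so the
orbit of `ζ` satisfies `Re f^∘n(ζ) ≥ R + n c`. The increments `φ_{n+1} - φ_n = f(f^∘n ζ) - (f^∘n ζ + β)`
are therefore bounded by `M_{ε,k}(R + n c)`, which is summable by comparison with its antiderivative
`-ε⁻¹ (log^∘k y)^{-ε}`, bounded above by `0`. The Weierstrass M-test gives uniform convergence, the
uniform limit of holomorphic functions is holomorphic, and `φ_n(f ζ) = φ_{n+1}(ζ) + β` passes to the limit.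
-/

open Filter Set

/-- `M_{ε,k}(x) = (∏_{j=0}^{k-1} log^∘j(x))⁻¹ · (log^∘k(x))^{-(1+ε)}`. -/
noncomputable def Mfun (ε : ℝ) (k : ℕ) (x : ℝ) : ℝ :=
  (∏ j ∈ Finset.range k, Real.log^[j] x)⁻¹ * (Real.log^[k] x) ^ (-(1 + ε))

open Topology Function

section Iterates

variable {α E : Type*}

lemma add_mul_le_apply_iterate {f : α → α} {D : Set α} {h : α → ℝ} {c : ℝ} (hf : MapsTo f D D)
    (hc : ∀ x ∈ D, h x + c ≤ h (f x)) (n : ℕ) {x : α} (hx : x ∈ D) :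
    h x + n * c ≤ h (f^[n] x) := by
  induction n with
  | zero => simp
  | succ n ih =>
    rw [iterate_succ_apply']
    push_cast
    linarith [hc _ (hf.iterate n hx)]

lemma eq_add_of_tendsto_iterate_sub_nsmul [AddCommGroup E] [TopologicalSpace E]
    [IsTopologicalAddGroup E] [T2Space E] {f : E → E} {β x a b : E}
    (ha : Tendsto (fun n : ℕ => f^[n] x - n • β) atTop (𝓝 a))
    (hb : Tendsto (fun n : ℕ => f^[n] (f x) - n • β) atTop (𝓝 b)) : b = a + β := by
  have hshift : (fun n : ℕ => f^[n] (f x) - n • β) =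
      fun n => (f^[n + 1] x - (n + 1) • β) + β := by
    ext n
    rw [iterate_succ_apply, succ_nsmul]
    abel
  rw [hshift] at hb
  exact tendsto_nhds_unique hb ((ha.comp (tendsto_add_atTop_nat 1)).add_const β)

lemma exists_tendstoUniformlyOn_iterate_sub_nsmul [NormedAddCommGroup E] [CompleteSpace E]
    {f : E → E} {D : Set E} {β : E} {u : ℕ → ℝ} (hu : Summable u)
    (hbound : ∀ n, ∀ x ∈ D, ‖f (f^[n] x) - (f^[n] x + β)‖ ≤ u n) :
    ∃ φ : E → E, TendstoUniformlyOn (fun (n : ℕ) x => f^[n] x - n • β) φ atTop D := by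
  have htelescope : ∀ (N : ℕ) (x : E),
      x + ∑ n ∈ Finset.range N, (f (f^[n] x) - (f^[n] x + β)) = f^[N] x - N • β := by
    intro N x
    induction N with
    | zero => simp
    | succ N ih =>
      rw [Finset.sum_range_succ, ← add_assoc, ih, iterate_succ_apply', succ_nsmul]
      abel
  have hsum := tendstoUniformlyOn_tsum_nat hu hbound
  refine ⟨fun x => x + ∑' n, (f (f^[n] x) - (f^[n] x + β)), ?_⟩
  rw [Metric.tendstoUniformlyOn_iff] at hsum ⊢
  intro δ hδ
  filter_upwards [hsum δ hδ] with N hN x hx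
  rw [← htelescope, dist_add_left]
  exact hN x hx

end Iterates

lemma summable_of_hasDerivAt_of_bddAbove {F g : ℝ → ℝ} {a B c R : ℝ}
    (hderiv : ∀ x, a < x → HasDerivAt F (g x) x) (hanti : AntitoneOn g (Ioi a))
    (hnonneg : ∀ x, a < x → 0 ≤ g x) (hB : ∀ x, a < x → F x ≤ B) (haR : a < R) (hc : 0 < c) :
    Summable fun n : ℕ => g (R + n * c) := by
  set x : ℕ → ℝ := fun n => R + n * c
  have hax : ∀ n, a < x n := fun n => haR.trans_le (le_add_of_nonneg_right (by positivity))
  have hstep : ∀ n, c * g (x (n + 1)) ≤ F (x (n + 1)) - F (x n) := by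
    intro n
    have hlt : x n < x (n + 1) := by simp only [x]; push_cast; linarith
    obtain ⟨ξ, hξ, hslope⟩ := exists_hasDerivAt_eq_slope F g hlt
      (fun y hy => (hderiv y ((hax n).trans_le hy.1)).continuousAt.continuousWithinAt)
      (fun y hy => hderiv y ((hax n).trans hy.1))
    have hgap : x (n + 1) - x n = c := by simp only [x]; push_cast; ring
    rw [hgap, eq_div_iff hc.ne'] at hslope
    rw [← hslope, mul_comm c]
    exact mul_le_mul_of_nonneg_right
      (hanti ((hax n).trans hξ.1) (hax (n + 1)) hξ.2.le) hc.le
  have hpartial : ∀ N, ∑ n ∈ Finset.range N, g (x (n + 1)) ≤ (B - F R) / c := by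
    intro N
    rw [le_div_iff₀ hc, Finset.sum_mul]
    calc ∑ n ∈ Finset.range N, g (x (n + 1)) * c
        ≤ ∑ n ∈ Finset.range N, (F (x (n + 1)) - F (x n)) :=
          Finset.sum_le_sum fun n _ => by linarith [hstep n]
      _ = F (x N) - F R := by rw [Finset.sum_range_sub (fun n => F (x n))]; simp [x]
      _ ≤ B - F R := by linarith [hB _ (hax N)]
  exact (summable_nat_add_iff 1).mp
    (summable_of_sum_range_le (fun n => hnonneg _ (hax (n + 1))) hpartial)

section IteratedLog

open Real

variable {k : ℕ} {x : ℝ}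

lemma exp_iterate_nonneg (m : ℕ) : 0 ≤ exp^[m] 0 := by
  cases m with
  | zero => simp
  | succ m => rw [iterate_succ_apply']; positivity

lemma lt_log_of_exp_iterate_succ_lt (hx : exp^[k + 1] 0 < x) : exp^[k] 0 < log x := by
  rw [iterate_succ_apply'] at hx
  exact (lt_log_iff_exp_lt ((exp_pos _).trans hx)).2 hx

lemma exp_iterate_sub_lt_log_iterate {j : ℕ} (hx : exp^[k] 0 < x) (hj : j ≤ k) :
    exp^[k - j] 0 < log^[j] x := by
  induction j generalizing k x with
  | zero => simpa using hx
  | succ j ih =>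
    obtain ⟨k, rfl⟩ : ∃ k', k = k' + 1 := ⟨k - 1, by omega⟩
    rw [Nat.add_sub_add_right, iterate_succ_apply]
    exact ih (lt_log_of_exp_iterate_succ_lt hx) (by omega)

lemma log_iterate_pos {j : ℕ} (hx : exp^[k] 0 < x) (hj : j ≤ k) : 0 < log^[j] x :=
  (exp_iterate_nonneg _).trans_lt (exp_iterate_sub_lt_log_iterate hx hj)

lemma log_iterate_le_log_iterate {j : ℕ} {y : ℝ} (hx : exp^[k] 0 < x) (hxy : x ≤ y)
    (hj : j ≤ k) : log^[j] x ≤ log^[j] y := by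
  induction j generalizing k x y with
  | zero => simpa using hxy
  | succ j ih =>
    obtain ⟨k, rfl⟩ : ∃ k', k = k' + 1 := ⟨k - 1, by omega⟩
    rw [iterate_succ_apply, iterate_succ_apply]
    exact ih (lt_log_of_exp_iterate_succ_lt hx)
      (log_le_log ((exp_iterate_nonneg _).trans_lt hx) hxy) (by omega)

lemma hasDerivAt_log_iterate (hx : exp^[k] 0 < x) :
    HasDerivAt log^[k] (∏ j ∈ Finset.range k, (log^[j] x)⁻¹) x := by
  induction k generalizing x with
  | zero => simpa using hasDerivAt_id x
  | succ k ih =>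
    have h := (ih (lt_log_of_exp_iterate_succ_lt hx)).comp x
      (hasDerivAt_log ((exp_iterate_nonneg _).trans_lt hx).ne')
    rw [← iterate_succ] at h
    refine h.congr_deriv ?_
    rw [Finset.prod_range_succ']
    simp only [iterate_succ_apply, iterate_zero_apply]

lemma prod_log_iterate_pos (hx : exp^[k] 0 < x) : 0 < ∏ j ∈ Finset.range k, log^[j] x :=
  Finset.prod_pos fun _ hj => log_iterate_pos hx (Finset.mem_range.1 hj).le

lemma Mfun_pos (ε : ℝ) (hx : exp^[k] 0 < x) : 0 < Mfun ε k x :=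
  mul_pos (inv_pos.2 (prod_log_iterate_pos hx)) (rpow_pos_of_pos (log_iterate_pos hx le_rfl) _)

lemma Mfun_antitoneOn {ε : ℝ} (hε : -1 ≤ ε) : AntitoneOn (Mfun ε k) (Ioi (exp^[k] 0)) := by
  intro x hx y _ hxy
  have hlog_pos : ∀ j ≤ k, 0 < log^[j] x := fun _ hj => log_iterate_pos hx hj
  have hlog_le : ∀ j ≤ k, log^[j] x ≤ log^[j] y := fun j hj => log_iterate_le_log_iterate hx hxy hj
  apply mul_le_mul
  · exact inv_anti₀ (prod_log_iterate_pos hx) (Finset.prod_le_prod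
      (fun j hj => (hlog_pos j (Finset.mem_range.1 hj).le).le)
      fun j hj => hlog_le j (Finset.mem_range.1 hj).le)
  · exact rpow_le_rpow_of_nonpos (hlog_pos k le_rfl) (hlog_le k le_rfl) (by linarith)
  · exact (rpow_pos_of_pos ((hlog_pos k le_rfl).trans_le (hlog_le k le_rfl)) _).le
  · exact (inv_pos.2 (prod_log_iterate_pos hx)).le

lemma hasDerivAt_neg_inv_mul_log_iterate_rpow {ε : ℝ} (hε : ε ≠ 0) (hx : exp^[k] 0 < x) :
    HasDerivAt (fun y => -(ε⁻¹ * (log^[k] y) ^ (-ε))) (Mfun ε k x) x := by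
  have h := (((hasDerivAt_rpow_const (p := -ε) (Or.inl (log_iterate_pos hx le_rfl).ne')).comp x
    (hasDerivAt_log_iterate hx)).const_mul ε⁻¹).neg
  refine h.congr_deriv ?_
  rw [Mfun, Finset.prod_inv_distrib, show -(1 + ε) = -ε - 1 by ring]
  field_simp

lemma summable_Mfun_add_mul {ε R c : ℝ} (hε : 0 < ε) (hR : exp^[k] 0 < R) (hc : 0 < c) :
    Summable fun n : ℕ => Mfun ε k (R + n * c) :=
  summable_of_hasDerivAt_of_bddAbove (B := 0)
    (fun _ hy => hasDerivAt_neg_inv_mul_log_iterate_rpow hε.ne' hy)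
    (Mfun_antitoneOn (by linarith)) (fun _ hy => (Mfun_pos ε hy).le)
    (fun y hy => neg_nonpos.2 (by have := log_iterate_pos hy le_rfl; positivity)) hR hc

end IteratedLog

theorem koenigs_sequence_converges_uniformly_general
    (β : ℂ) (ε : ℝ) (hε : 0 < ε) (k : ℕ)
    (R : ℝ) (hR : Real.exp^[k] 0 < R) (hMR : Mfun ε k R < β.re)
    (D : Set ℂ) (hD : IsOpen D) (hDre : ∀ ζ ∈ D, R ≤ ζ.re)
    (f : ℂ → ℂ) (hf : DifferentiableOn ℂ f D) (hinv : Set.MapsTo f D D)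
    (hbound : ∀ ζ ∈ D, ‖f ζ - (ζ + β)‖ ≤ Mfun ε k ζ.re) :
    ∃ φ : ℂ → ℂ,
      TendstoUniformlyOn (fun (n : ℕ) (ζ : ℂ) => f^[n] ζ - (n : ℂ) * β) φ atTop D ∧
      DifferentiableOn ℂ φ D ∧
      ∀ ζ ∈ D, φ (f ζ) = φ ζ + β := by
  set c := β.re - Mfun ε k R
  have hc : 0 < c := sub_pos.2 hMR
  have hM_anti : ∀ {x y}, R ≤ x → x ≤ y → Mfun ε k y ≤ Mfun ε k x := fun hx hxy =>
    Mfun_antitoneOn (by linarith) (hR.trans_le hx) (hR.trans_le (hx.trans hxy)) hxy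
  have hre_step : ∀ ζ ∈ D, ζ.re + c ≤ (f ζ).re := by
    intro ζ hζ
    have h := neg_le_of_abs_le <| (Complex.abs_re_le_norm _).trans <|
      (hbound ζ hζ).trans (hM_anti le_rfl (hDre ζ hζ))
    simp only [Complex.sub_re, Complex.add_re] at h
    linarith
  have horbit : ∀ n, ∀ ζ ∈ D, ‖f (f^[n] ζ) - (f^[n] ζ + β)‖ ≤ Mfun ε k (R + n * c) := by
    intro n ζ hζ
    exact (hbound _ (hinv.iterate n hζ)).trans <| hM_anti (le_add_of_nonneg_right (by positivity))
      (by linarith [hDre ζ hζ, add_mul_le_apply_iterate hinv hre_step n hζ])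
  obtain ⟨φ, hφ⟩ :=
    exists_tendstoUniformlyOn_iterate_sub_nsmul (summable_Mfun_add_mul hε hR hc) horbit
  have hφ_mul : TendstoUniformlyOn (fun (n : ℕ) ζ => f^[n] ζ - (n : ℂ) * β) φ atTop D := by
    simpa only [nsmul_eq_mul] using hφ
  refine ⟨φ, hφ_mul, ?_, fun ζ hζ => ?_⟩
  · exact hφ_mul.tendstoLocallyUniformlyOn.differentiableOn
      (Eventually.of_forall fun n => (hf.iterate hinv n).sub_const _) hD
  · exact eq_add_of_tendsto_iterate_sub_nsmul (hφ.tendsto_at hζ) (hφ.tendsto_at (hinv hζ))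

theorem koenigs_sequence_converges_uniformly
    (β : ℂ) (hβ : 0 < β.re) (ε : ℝ) (hε : 0 < ε) (k : ℕ)
    (R : ℝ) (hR : Real.exp^[k] 0 < R) (hMR : Mfun ε k R < β.re)
    (D : Set ℂ) (hD : IsOpen D) (hDre : ∀ ζ ∈ D, R ≤ ζ.re)
    (f : ℂ → ℂ) (hf : DifferentiableOn ℂ f D) (hinv : Set.MapsTo f D D)
    (hbound : ∀ ζ ∈ D, ‖f ζ - (ζ + β)‖ ≤ Mfun ε k ζ.re) :
    ∃ φ : ℂ → ℂ,
      TendstoUniformlyOn (fun (n : ℕ) (ζ : ℂ) => f^[n] ζ - (n : ℂ) * β) φ atTop D ∧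
      DifferentiableOn ℂ φ D ∧
      ∀ ζ ∈ D, φ (f ζ) = φ ζ + β :=
  koenigs_sequence_converges_uniformly_general β ε hε k R hR hMR D hD hDre f hf hinv hbound
end

section
/- Let β ∈ ℂ, let D ⊆ ℂ, and let f : D → D be a map such that Re(f^∘n(ζ)) → +∞ as n → ∞ for every ζ ∈ D. Suppose φ, ψ : D → ℂ satisfy φ(f(ζ)) = φ(ζ) + β and ψ(f(ζ)) = ψ(ζ) + β for all ζ ∈ D, and that both φ(ζ) − ζ → 0 and ψ(ζ) − ζ → 0 uniformly on D as Re(ζ) → +∞ (i.e. for every δ > 0 there is R such that |φ(ζ) − ζ| ≤ δ and |ψ(ζ) − ζ| ≤ δ for all ζ ∈ D with Re(ζ) ≥ R). Then φ(ζ) = ψ(ζ) for all ζ ∈ D. -/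
open Filter Set

theorem uniqueness_of_tangent_to_identity_linearization
    (β : ℂ) (D : Set ℂ) (f : ℂ → ℂ) (hinv : Set.MapsTo f D D)
    (hiter : ∀ ζ ∈ D, Tendsto (fun n : ℕ => (f^[n] ζ).re) atTop atTop)
    (φ ψ : ℂ → ℂ)
    (hφeq : ∀ ζ ∈ D, φ (f ζ) = φ ζ + β)
    (hψeq : ∀ ζ ∈ D, ψ (f ζ) = ψ ζ + β)
    (hφunif : ∀ δ > (0 : ℝ), ∃ R : ℝ, ∀ ζ ∈ D, R ≤ ζ.re → ‖φ ζ - ζ‖ ≤ δ)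
    (hψunif : ∀ δ > (0 : ℝ), ∃ R : ℝ, ∀ ζ ∈ D, R ≤ ζ.re → ‖ψ ζ - ζ‖ ≤ δ) :
    ∀ ζ ∈ D, φ ζ = ψ ζ := by
  intro ζ hζ
  have hmem : ∀ n : ℕ, f^[n] ζ ∈ D := by
    intro n
    induction n with
    | zero => simpa
    | succ n ih => rw [Function.iterate_succ_apply']; exact hinv ih
  have key : ∀ n : ℕ, φ (f^[n] ζ) - ψ (f^[n] ζ) = φ ζ - ψ ζ := by
    intro n
    induction n with
    | zero => simp
    | succ n ih =>
      rw [Function.iterate_succ_apply', hφeq _ (hmem n), hψeq _ (hmem n)]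
      ring_nf
      ring_nf at ih
      exact ih
  have hnorm : ∀ δ > (0 : ℝ), ‖φ ζ - ψ ζ‖ ≤ 2 * δ := by
    intro δ hδ
    obtain ⟨R₁, h₁⟩ := hφunif δ hδ
    obtain ⟨R₂, h₂⟩ := hψunif δ hδ
    obtain ⟨n, hn⟩ := (hiter ζ hζ).eventually_ge_atTop (max R₁ R₂) |>.exists
    have hz := hmem n
    calc ‖φ ζ - ψ ζ‖ = ‖φ (f^[n] ζ) - ψ (f^[n] ζ)‖ := by rw [key n]
      _ = ‖(φ (f^[n] ζ) - f^[n] ζ) - (ψ (f^[n] ζ) - f^[n] ζ)‖ := by ring_nf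
      _ ≤ ‖φ (f^[n] ζ) - f^[n] ζ‖ + ‖ψ (f^[n] ζ) - f^[n] ζ‖ := norm_sub_le _ _
      _ ≤ δ + δ := add_le_add (h₁ _ hz (le_trans (le_max_left _ _) hn))
            (h₂ _ hz (le_trans (le_max_right _ _) hn))
      _ = 2 * δ := by ring
  have : ‖φ ζ - ψ ζ‖ ≤ 0 := by
    by_contra h
    push_neg at h
    have := hnorm (‖φ ζ - ψ ζ‖ / 4) (by linarith)
    linarith
  have := le_antisymm this (norm_nonneg _)
  rwa [norm_eq_zero, sub_eq_zero] at this
end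

section
/- Let α > 0, ρ > 0 and R ∈ ℝ. Let D ⊆ ℂ be an open set with Re(ζ) ≥ R for all ζ ∈ D, and let f : D → ℂ be holomorphic with f(D) ⊆ D and Re(f^∘n(ζ)) ≥ Re(ζ) + n·ρ for all ζ ∈ D and n ∈ ℕ. Let h : D → ℂ be holomorphic with |h(ζ)| ≤ exp(−α·Re(ζ)) for all ζ ∈ D. Then the series Σ_{n=0}^{∞} h(f^∘n(ζ)) converges uniformly on D, the function ψ(ζ) := −Σ_{n=0}^{∞} h(f^∘n(ζ)) is holomorphic on D, satisfies the homological equation ψ(f(ζ)) − ψ(ζ) = h(ζ) for all ζ ∈ D, and obeys the estimate |ψ(ζ)| ≤ exp(−α·Re(ζ)) / (1 − exp(−α·ρ)) for all ζ ∈ D. -/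
open Filter Set

theorem homological_equation_solution
    (α ρ R : ℝ) (hα : 0 < α) (hρ : 0 < ρ)
    (D : Set ℂ) (hD : IsOpen D) (hDre : ∀ ζ ∈ D, R ≤ ζ.re)
    (f : ℂ → ℂ) (hf : DifferentiableOn ℂ f D) (hinv : Set.MapsTo f D D)
    (hiter : ∀ ζ ∈ D, ∀ n : ℕ, ζ.re + n * ρ ≤ (f^[n] ζ).re)
    (h : ℂ → ℂ) (hh : DifferentiableOn ℂ h D)
    (hbound : ∀ ζ ∈ D, ‖h ζ‖ ≤ Real.exp (-α * ζ.re)) :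
    ∃ ψ : ℂ → ℂ,
      TendstoUniformlyOn
        (fun (N : ℕ) (ζ : ℂ) => -∑ n ∈ Finset.range N, h (f^[n] ζ)) ψ atTop D ∧
      DifferentiableOn ℂ ψ D ∧
      (∀ ζ ∈ D, ψ (f ζ) - ψ ζ = h ζ) ∧
      (∀ ζ ∈ D, ‖ψ ζ‖ ≤ Real.exp (-α * ζ.re) / (1 - Real.exp (-α * ρ))) := by
  set r : ℝ := Real.exp (-α * ρ) with hr
  have hr0 : 0 < r := Real.exp_pos _
  have hr1 : r < 1 := by
    rw [hr, Real.exp_lt_one_iff]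
    nlinarith
  have hmaps : ∀ n : ℕ, Set.MapsTo (f^[n]) D D := fun n => hinv.iterate n
  -- pointwise bound
  have hptw : ∀ ζ ∈ D, ∀ n : ℕ, ‖h (f^[n] ζ)‖ ≤ Real.exp (-α * ζ.re) * r ^ n := by
    intro ζ hζ n
    have h1 : ‖h (f^[n] ζ)‖ ≤ Real.exp (-α * (f^[n] ζ).re) := hbound _ (hmaps n hζ)
    have h2 : Real.exp (-α * (f^[n] ζ).re) ≤ Real.exp (-α * (ζ.re + n * ρ)) := by
      apply Real.exp_le_exp.2
      have := hiter ζ hζ n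
      nlinarith
    calc ‖h (f^[n] ζ)‖ ≤ Real.exp (-α * (ζ.re + n * ρ)) := h1.trans h2
      _ = Real.exp (-α * ζ.re) * r ^ n := by
          rw [hr, ← Real.exp_nat_mul, ← Real.exp_add]; ring_nf
  have hsum : ∀ ζ ∈ D, Summable (fun n : ℕ => h (f^[n] ζ)) := by
    intro ζ hζ
    apply Summable.of_norm
    exact Summable.of_nonneg_of_le (fun n => norm_nonneg _) (hptw ζ hζ)
      ((summable_geometric_of_lt_one hr0.le hr1).mul_left _)
  refine ⟨fun ζ => -∑' n, h (f^[n] ζ), ?_, ?_, ?_, ?_⟩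
  · -- uniform convergence
    have hu : Summable (fun n : ℕ => Real.exp (-α * R) * r ^ n) :=
      (summable_geometric_of_lt_one hr0.le hr1).mul_left _
    have := tendstoUniformlyOn_tsum_nat hu (f := fun n ζ => h (f^[n] ζ)) (s := D)
      (fun n ζ hζ => (hptw ζ hζ n).trans (by
        have : Real.exp (-α * ζ.re) ≤ Real.exp (-α * R) := by
          apply Real.exp_le_exp.2
          have := hDre ζ hζ
          nlinarith
        nlinarith [pow_nonneg hr0.le n]))
    simpa [Function.comp_def] using uniformContinuous_neg.comp_tendstoUniformlyOn this
  · -- differentiability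
    have huc : TendstoUniformlyOn
        (fun (N : ℕ) (ζ : ℂ) => -∑ n ∈ Finset.range N, h (f^[n] ζ))
        (fun ζ => -∑' n, h (f^[n] ζ)) atTop D := by
      have hu : Summable (fun n : ℕ => Real.exp (-α * R) * r ^ n) :=
        (summable_geometric_of_lt_one hr0.le hr1).mul_left _
      have base := tendstoUniformlyOn_tsum_nat hu (f := fun n ζ => h (f^[n] ζ)) (s := D)
        (fun n ζ hζ => (hptw ζ hζ n).trans (by
        have : Real.exp (-α * ζ.re) ≤ Real.exp (-α * R) := by
          apply Real.exp_le_exp.2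
          have := hDre ζ hζ
          nlinarith
        nlinarith [pow_nonneg hr0.le n]))
      simpa [Function.comp_def] using uniformContinuous_neg.comp_tendstoUniformlyOn base
    have hiterdiff : ∀ n : ℕ, DifferentiableOn ℂ (f^[n]) D := by
      intro n
      induction n with
      | zero => simpa using differentiableOn_id
      | succ k ih =>
        simp only [Function.iterate_succ']
        exact hf.comp ih (hmaps k)
    apply huc.tendstoLocallyUniformlyOn.differentiableOn ?_ hD
    filter_upwards with N
    exact (DifferentiableOn.fun_sum fun n _ => hh.comp (hiterdiff n) (hmaps n)).neg
  · -- homological equation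
    intro ζ hζ
    have hs := hsum ζ hζ
    have hshift : (∑' n : ℕ, h (f^[n] (f ζ))) = ∑' n : ℕ, h (f^[n + 1] ζ) := by
      exact tsum_congr fun n => by rw [Function.iterate_succ_apply]
    have h0 : (∑' n : ℕ, h (f^[n] ζ)) = h ζ + ∑' n : ℕ, h (f^[n + 1] ζ) := by
      simpa using Summable.tsum_eq_zero_add hs
    show -∑' n : ℕ, h (f^[n] (f ζ)) - -∑' n : ℕ, h (f^[n] ζ) = h ζ
    rw [hshift, h0]; ring
  · -- bound
    intro ζ hζ
    have hsnorm : Summable (fun n : ℕ => ‖h (f^[n] ζ)‖) :=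
      Summable.of_nonneg_of_le (fun n => norm_nonneg _) (hptw ζ hζ)
        ((summable_geometric_of_lt_one hr0.le hr1).mul_left _)
    have h1 : ‖∑' n : ℕ, h (f^[n] ζ)‖ ≤ ∑' n : ℕ, ‖h (f^[n] ζ)‖ :=
      norm_tsum_le_tsum_norm hsnorm
    have h2 : (∑' n : ℕ, ‖h (f^[n] ζ)‖) ≤ ∑' n : ℕ, Real.exp (-α * ζ.re) * r ^ n :=
      Summable.tsum_le_tsum (hptw ζ hζ) hsnorm
        ((summable_geometric_of_lt_one hr0.le hr1).mul_left _)
    have h3 : (∑' n : ℕ, Real.exp (-α * ζ.re) * r ^ n)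
        = Real.exp (-α * ζ.re) / (1 - r) := by
      rw [tsum_mul_left, tsum_geometric_of_lt_one hr0.le hr1]
      ring
    calc ‖-∑' n : ℕ, h (f^[n] ζ)‖ = ‖∑' n : ℕ, h (f^[n] ζ)‖ := norm_neg _
      _ ≤ Real.exp (-α * ζ.re) / (1 - r) := by rw [← h3]; exact h1.trans h2
end

section
/- For every C > 0, every β ∈ ℂ with Re(β) > 0, every ε > 0 and every k ∈ ℕ, there exists a lower-upper pair of type (β,ε,k) (with some t > exp^∘k(0) and functions h_l, h_u : [t,∞) → ℝ) such that the associated set D_{h_l,h_u} is contained in the standard quadratic domain R_C. -/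
open Filter Set

/-- `(t, hl, hu)` is a lower-upper pair of type `(β, ε, k)`. -/
def IsLUPair (β : ℂ) (ε : ℝ) (k : ℕ) (t : ℝ) (hl hu : ℝ → ℝ) : Prop :=
  Real.exp^[k] 0 < t ∧
  (∀ x, t ≤ x → 0 < β.re - Mfun ε k x) ∧
  (∀ x, t ≤ x → hl x < hu x) ∧
  (0 < β.im →
    (∀ x, t ≤ x → 0 < β.im - Mfun ε k x) ∧
    (AntitoneOn hl (Set.Ici t) ∨
      (MonotoneOn hl (Set.Ici t) ∧
        ∀ x, t ≤ x → hl (x + (β.re + Mfun ε k x)) - hl x ≤ β.im - Mfun ε k x)) ∧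
    MonotoneOn hu (Set.Ici t) ∧
    (∀ x, t ≤ x → β.im + Mfun ε k x ≤ hu (x + (β.re - Mfun ε k x)) - hu x)) ∧
  (β.im = 0 →
    AntitoneOn hl (Set.Ici t) ∧
    (∀ x, t ≤ x → hl (x + (β.re - Mfun ε k x)) - hl x ≤ -(Mfun ε k x)) ∧
    MonotoneOn hu (Set.Ici t) ∧
    (∀ x, t ≤ x → Mfun ε k x ≤ hu (x + (β.re - Mfun ε k x)) - hu x)) ∧
  (β.im < 0 →
    (∀ x, t ≤ x → 0 < -β.im - Mfun ε k x) ∧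
    AntitoneOn hl (Set.Ici t) ∧
    (∀ x, t ≤ x → hl (x + (β.re - Mfun ε k x)) - hl x ≤ β.im - Mfun ε k x) ∧
    (MonotoneOn hu (Set.Ici t) ∨
      (AntitoneOn hu (Set.Ici t) ∧
        ∀ x, t ≤ x → β.im + Mfun ε k x ≤ hu (x + (β.re + Mfun ε k x)) - hu x))) 

/-- The set `D_{h_l,h_u}` associated with a lower-upper pair. -/
def DSet (t : ℝ) (hl hu : ℝ → ℝ) : Set ℂ :=
  {ζ : ℂ | t ≤ ζ.re ∧ hl ζ.re < ζ.im ∧ ζ.im < hu ζ.re}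

/-! The preimage of `w` under `ζ ↦ ζ + C √(ζ + 1)` is found by solving a quadratic in
`u = √(ζ + 1)`: `u = (√(C² + 4(w + 1)) - C) / 2`, and `ζ = w - C u` lies in the right
half-plane as soon as `C √‖C² + 4(w + 1)‖ < 2 Re w + C²`. In a sector `|Im w| ≤ a Re w` this
holds for large `Re w`, because the square root only grows like `√(Re w)`. On the other hand,
`M_{ε,k}(x) → 0`, so for large `x` the lines `±a x` with slope `a = 2(|Im β| + 1) / Re β`
form a lower-upper pair of type `(β, ε, k)`. -/

open Topology

namespace Complex

lemma sqrt_re_le_re_cpow_inv_two (z : ℂ) : √z.re ≤ (z ^ (2⁻¹ : ℂ)).re := by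
  rw [cpow_inv_two_re]
  exact Real.sqrt_le_sqrt (by linarith [re_le_norm z])

lemma re_cpow_inv_two_le_sqrt_norm (z : ℂ) : (z ^ (2⁻¹ : ℂ)).re ≤ √‖z‖ := by
  rw [cpow_inv_two_re]
  exact Real.sqrt_le_sqrt (by linarith [re_le_norm z])

end Complex

lemma mem_sqd_of_sq_mul_norm_lt {C : ℝ} {w : ℂ} (hw : 0 < w.re)
    (h : C ^ 2 * ‖(C : ℂ) ^ 2 + 4 * (w + 1)‖ < (2 * w.re + C ^ 2) ^ 2) : w ∈ sqd C := by
  set z : ℂ := (C : ℂ) ^ 2 + 4 * (w + 1) with hz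
  set S : ℂ := z ^ (2⁻¹ : ℂ)
  have hzre : z.re = C ^ 2 + 4 * w.re + 4 := by
    simp only [hz, Complex.add_re, Complex.mul_re, ← Complex.ofReal_pow, Complex.ofReal_re]
    norm_num
    ring
  have hS_gt : |C| < S.re := calc
    |C| = √(C ^ 2) := (Real.sqrt_sq_eq_abs C).symm
    _ < √z.re := Real.sqrt_lt_sqrt (sq_nonneg C) (by rw [hzre]; linarith)
    _ ≤ S.re := Complex.sqrt_re_le_re_cpow_inv_two z
  have hS_lt : C * S.re < 2 * w.re + C ^ 2 := calc
    C * S.re ≤ |C| * √‖z‖ :=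
      mul_le_mul (le_abs_self C) (Complex.re_cpow_inv_two_le_sqrt_norm z)
        (by linarith [abs_nonneg C]) (abs_nonneg C)
    _ = √(C ^ 2 * ‖z‖) := by rw [Real.sqrt_mul (sq_nonneg C), Real.sqrt_sq_eq_abs]
    _ < √((2 * w.re + C ^ 2) ^ 2) := Real.sqrt_lt_sqrt (by positivity) h
    _ = 2 * w.re + C ^ 2 := Real.sqrt_sq (by positivity)
  set u : ℂ := (S - C) / 2
  have hure : u.re = (S.re - C) / 2 := by simp [u]
  have hu : 0 < u.re := by rw [hure]; linarith [le_abs_self C]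
  have hζ : w - C * u + 1 = u ^ 2 := by
    linear_combination (-Complex.cpow_ofNat_inv_pow z 2 - hz) / 4
  refine ⟨w - C * u, ?_, ?_⟩
  · show 0 < (w - C * u).re
    simp only [Complex.sub_re, Complex.mul_re, Complex.ofReal_re, Complex.ofReal_im, zero_mul,
      sub_zero, hure]
    linarith
  · show w - C * u + C * (w - C * u + 1) ^ ((1 : ℂ) / 2) = w
    rw [hζ, one_div, Complex.sq_cpow_two_inv hu]
    ring

lemma mem_sqd_of_abs_im_le {C a : ℝ} {w : ℂ} (hw : 0 < w.re) (him : |w.im| ≤ a * w.re)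
    (hlarge : C ^ 2 * (1 + a * w.re) < w.re ^ 2) : w ∈ sqd C := by
  refine mem_sqd_of_sq_mul_norm_lt hw ?_
  have hnorm : ‖(C : ℂ) ^ 2 + 4 * (w + 1)‖ ≤ C ^ 2 + 4 * w.re + 4 + 4 * |w.im| := by
    have hre : 0 < C ^ 2 + 4 * (w.re + 1) := by positivity
    refine (Complex.norm_le_abs_re_add_abs_im _).trans_eq ?_
    simp only [Complex.add_re, Complex.add_im, Complex.mul_re, Complex.mul_im,
      ← Complex.ofReal_pow, Complex.ofReal_re, Complex.ofReal_im]
    norm_num [abs_of_pos hre]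
    ring
  calc C ^ 2 * ‖(C : ℂ) ^ 2 + 4 * (w + 1)‖
      ≤ C ^ 2 * (C ^ 2 + 4 * w.re + 4 + 4 * (a * w.re)) := by gcongr; linarith
    _ < (2 * w.re + C ^ 2) ^ 2 := by nlinarith

lemma DSet_neg_mul_mul_subset_sqd {C a t : ℝ} (ha : 0 ≤ a) (ht : C ^ 2 * a + |C| + 1 ≤ t) :
    DSet t (fun x => -(a * x)) (fun x => a * x) ⊆ sqd C := by
  rintro w ⟨hw, hlw, hwu⟩
  have hCa : 0 ≤ C ^ 2 * a := mul_nonneg (sq_nonneg C) ha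
  have hbig : C ^ 2 * a + |C| + 1 ≤ w.re := ht.trans hw
  have hpos : 0 < w.re := by linarith [abs_nonneg C]
  refine mem_sqd_of_abs_im_le hpos (abs_le.2 ⟨by linarith, hwu.le⟩) ?_
  nlinarith [mul_le_mul_of_nonneg_right hbig hpos.le, sq_abs C, abs_nonneg C]

lemma tendsto_log_iterate_atTop (j : ℕ) : Tendsto (Real.log^[j]) atTop atTop := by
  induction j with
  | zero => exact tendsto_id
  | succ j ih => simpa only [Function.iterate_succ'] using Real.tendsto_log_atTop.comp ih

lemma tendsto_Mfun_zero {ε : ℝ} (hε : 0 < ε) (k : ℕ) : Tendsto (Mfun ε k) atTop (𝓝 0) := by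
  have hpow : Tendsto (fun x => Real.log^[k] x ^ (-(1 + ε))) atTop (𝓝 0) :=
    (tendsto_rpow_neg_atTop (by linarith)).comp (tendsto_log_iterate_atTop k)
  have hprod : ∀ᶠ x in atTop, 1 ≤ ∏ j ∈ Finset.range k, Real.log^[j] x := by
    filter_upwards [(Finset.eventually_all _).2 fun j _ =>
      (tendsto_log_iterate_atTop j).eventually_ge_atTop 1] with x hx
    exact Finset.one_le_prod hx
  have hlog : ∀ᶠ x in atTop, 0 ≤ Real.log^[k] x :=
    (tendsto_log_iterate_atTop k).eventually_ge_atTop 0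
  refine tendsto_of_tendsto_of_tendsto_of_le_of_le' tendsto_const_nhds hpow ?_ ?_ <;>
    filter_upwards [hprod, hlog] with x hx hxk
  · exact mul_nonneg (inv_nonneg.2 (zero_le_one.trans hx)) (Real.rpow_nonneg hxk _)
  · exact mul_le_of_le_one_left (Real.rpow_nonneg hxk _) (inv_le_one_of_one_le₀ hx)

lemma eventually_abs_Mfun_lt {ε δ : ℝ} (hε : 0 < ε) (k : ℕ) (hδ : 0 < δ) :
    ∀ᶠ x in atTop, |Mfun ε k x| < δ :=
  (Metric.tendsto_nhds.1 (tendsto_Mfun_zero hε k) δ hδ).mono fun x hx => by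
    simpa [Real.dist_eq] using hx

lemma exp_iterate_zero_nonneg (k : ℕ) : 0 ≤ Real.exp^[k] 0 := by
  cases k with
  | zero => rfl
  | succ k => exact (Function.iterate_succ_apply' _ _ _).symm ▸ (Real.exp_pos _).le

lemma isLUPair_neg_mul_mul {β : ℂ} {ε a t : ℝ} {k : ℕ} (ht : Real.exp^[k] 0 < t) (ha : 0 < a)
    (hre : ∀ x, t ≤ x → Mfun ε k x < β.re)
    (him : β.im ≠ 0 → ∀ x, t ≤ x → |Mfun ε k x| < |β.im|)
    (hslope : ∀ x, t ≤ x → |β.im| + |Mfun ε k x| ≤ a * (β.re - Mfun ε k x)) :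
    IsLUPair β ε k t (fun x => -(a * x)) (fun x => a * x) := by
  have hmono : MonotoneOn (fun x => a * x) (Ici t) :=
    fun _ _ _ _ hxy => mul_le_mul_of_nonneg_left hxy ha.le
  have hanti : AntitoneOn (fun x => -(a * x)) (Ici t) :=
    fun _ hx _ hy hxy => neg_le_neg (hmono hx hy hxy)
  refine ⟨ht, fun x hx => sub_pos.2 (hre x hx), fun x hx => ?_, fun hpos => ?_, fun hzero => ?_,
    fun hneg => ?_⟩
  · have : 0 < a * x := mul_pos ha ((exp_iterate_zero_nonneg k).trans_lt (ht.trans_le hx))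
    linarith
  · rw [abs_of_pos hpos] at him hslope
    refine ⟨fun x hx => ?_, Or.inl hanti, hmono, fun x hx => ?_⟩
    · linarith [le_abs_self (Mfun ε k x), him hpos.ne' x hx]
    · linarith [le_abs_self (Mfun ε k x), hslope x hx]
  · rw [hzero, abs_zero] at hslope
    refine ⟨hanti, fun x hx => ?_, hmono, fun x hx => ?_⟩
    · linarith [le_abs_self (Mfun ε k x), hslope x hx]
    · linarith [le_abs_self (Mfun ε k x), hslope x hx]
  · rw [abs_of_neg hneg] at him hslope
    refine ⟨fun x hx => ?_, hanti, fun x hx => ?_, Or.inl hmono⟩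
    · linarith [le_abs_self (Mfun ε k x), him hneg.ne x hx]
    · linarith [le_abs_self (Mfun ε k x), hslope x hx]

theorem standard_quadratic_domain_is_admissible_general
    (C : ℝ) (β : ℂ) (hβ : 0 < β.re) (ε : ℝ) (hε : 0 < ε) (k : ℕ) :
    ∃ (t : ℝ) (hl hu : ℝ → ℝ),
      IsLUPair β ε k t hl hu ∧ DSet t hl hu ⊆ sqd C := by
  set a := 2 * (|β.im| + 1) / β.re
  have ha : 0 < a := by positivity
  have him : ∀ᶠ x in atTop, β.im ≠ 0 → |Mfun ε k x| < |β.im| := by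
    by_cases h : β.im = 0
    · exact .of_forall fun _ h' => absurd h h'
    · exact (eventually_abs_Mfun_lt hε k (abs_pos.2 h)).mono fun _ hx _ => hx
  obtain ⟨t, ht⟩ := eventually_atTop.1 <| (eventually_gt_atTop (Real.exp^[k] 0)).and <|
    (eventually_ge_atTop (C ^ 2 * a + |C| + 1)).and <|
    (eventually_abs_Mfun_lt hε k (half_pos hβ)).and <|
    (eventually_abs_Mfun_lt hε k one_pos).and him
  refine ⟨t, _, _, isLUPair_neg_mul_mul (ht t le_rfl).1 ha (fun x hx => ?_)
    (fun h x hx => (ht x hx).2.2.2.2 h) (fun x hx => ?_),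
    DSet_neg_mul_mul_subset_sqd ha.le (ht t le_rfl).2.1⟩
  · linarith [le_abs_self (Mfun ε k x), (ht x hx).2.2.1]
  · have har : a * β.re = 2 * (|β.im| + 1) := div_mul_cancel₀ _ hβ.ne'
    obtain ⟨-, -, hhalf, hone, -⟩ := ht x hx
    -- `a (Re β - M) ≥ a Re β / 2 = |Im β| + 1 > |Im β| + |M|`
    nlinarith [mul_le_mul_of_nonneg_left (le_abs_self (Mfun ε k x)) ha.le]

theorem standard_quadratic_domain_is_admissible
    (C : ℝ) (hC : 0 < C) (β : ℂ) (hβ : 0 < β.re) (ε : ℝ) (hε : 0 < ε) (k : ℕ) :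
    ∃ (t : ℝ) (hl hu : ℝ → ℝ),
      IsLUPair β ε k t hl hu ∧ DSet t hl hu ⊆ sqd C :=
  standard_quadratic_domain_is_admissible_general C β hβ ε hε k
end

section
/- Let k ∈ ℕ with k ≥ 1, and let ζ ∈ ℂ with Re(ζ) > exp^∘k(0). Then the iterated principal logarithms L₁(ζ), …, L_k(ζ) are all well defined, and |L_m(ζ)| ≥ log^∘m(Re(ζ)) for every m with 1 ≤ m ≤ k. -/
open Filter Set

/-! Since `Re (Log w) = log |w| ≥ log (Re w)`, the bound `log^∘m (Re ζ) ≤ Re (L_m ζ)` propagates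
from `m` to `m + 1` as long as `log^∘m (Re ζ)` is positive, and `Re ζ > exp^∘k 0` keeps
`log^∘m (Re ζ) > exp^∘(k-m) 0 ≥ 0` for `m < k`. Finally `Re w ≤ |w|`. -/

lemma Real.iterate_exp_nonneg {a : ℝ} (ha : 0 ≤ a) : ∀ n : ℕ, 0 ≤ Real.exp^[n] a
  | 0 => ha
  | n + 1 => by
    rw [Function.iterate_succ_apply']
    exact (Real.exp_pos _).le

lemma Real.iterate_exp_lt_iterate_log {a x : ℝ} {n m : ℕ} (h : Real.exp^[n + m] a < x) :
    Real.exp^[n] a < Real.log^[m] x := by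
  induction m generalizing x with
  | zero => simpa using h
  | succ m ih =>
    rw [← add_assoc, Function.iterate_succ_apply'] at h
    have hx : 0 < x := (Real.exp_pos _).trans h
    rw [Function.iterate_succ_apply]
    exact ih ((Real.lt_log_iff_exp_lt hx).2 h)

lemma Complex.log_le_re_log {x : ℝ} {w : ℂ} (hx : 0 < x) (h : x ≤ w.re) :
    Real.log x ≤ (Complex.log w).re := by
  rw [Complex.log_re]
  exact Real.log_le_log hx (h.trans (Complex.re_le_norm w))

lemma Complex.iterate_log_le_re_iterate_log {m : ℕ} {x : ℝ} {z : ℂ}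
    (hx : ∀ j < m, 0 < Real.log^[j] x) (hz : x ≤ z.re) :
    Real.log^[m] x ≤ (Complex.log^[m] z).re := by
  induction m generalizing x z with
  | zero => exact hz
  | succ m ih =>
    rw [Function.iterate_succ_apply, Function.iterate_succ_apply]
    exact ih (fun j hj => hx (j + 1) (by omega))
      (Complex.log_le_re_log (hx 0 m.succ_pos) hz)

theorem iterated_complex_log_abs_lower_bound_general
    (k : ℕ) (ζ : ℂ) (hζ : Real.exp^[k] 0 < ζ.re) :
    (∀ m < k, 0 < (Complex.log^[m] ζ).re) ∧
    (∀ m, 1 ≤ m → m ≤ k → Real.log^[m] ζ.re ≤ ‖Complex.log^[m] ζ‖) := by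
  have hlog_pos : ∀ j < k, 0 < Real.log^[j] ζ.re := fun j hj =>
    (Real.iterate_exp_nonneg le_rfl (k - j)).trans_lt
      (Real.iterate_exp_lt_iterate_log (by rwa [Nat.sub_add_cancel hj.le]))
  have hre : ∀ m ≤ k, Real.log^[m] ζ.re ≤ (Complex.log^[m] ζ).re := fun m hm =>
    Complex.iterate_log_le_re_iterate_log (fun j hj => hlog_pos j (by omega)) le_rfl
  exact ⟨fun m hm => (hlog_pos m hm).trans_le (hre m hm.le),
    fun m _ hm => (hre m hm).trans (Complex.re_le_norm _)⟩

theorem iterated_complex_log_abs_lower_bound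
    (k : ℕ) (hk : 1 ≤ k) (ζ : ℂ) (hζ : Real.exp^[k] 0 < ζ.re) :
    (∀ m < k, 0 < (Complex.log^[m] ζ).re) ∧
    (∀ m, 1 ≤ m → m ≤ k → Real.log^[m] ζ.re ≤ ‖Complex.log^[m] ζ‖) :=
  iterated_complex_log_abs_lower_bound_general k ζ hζ
end

section
/- Let k ∈ ℕ with k ≥ 1 and let d > 0. Then there exist N > 0 and R > exp^∘k(0) such that for every ζ ∈ ℂ with Re(ζ) ≥ R and |Im(ζ)| ≤ d·Re(ζ), the iterated principal logarithms L₁(ζ), …, L_k(ζ) are well defined and |L_k(ζ)| ≤ N · log^∘k(Re(ζ)). -/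
/-!
Write `X_m = log^[m] (Re ζ)` and `w_m = Log^[m] ζ`. The sector condition gives
`X_0 ≤ Re w_0` and `‖w_0‖ ≤ N X_0`, and this pair of inequalities reproduces itself under one
logarithm: `Re (Log w) = log ‖w‖ ≥ log X`, while `|Im (Log w)| ≤ π` and
`log ‖w‖ ≤ log N + log X`, so `‖Log w‖ ≤ log N + π + log X ≤ N log X` as soon as
`log X ≥ log N + π`. Taking `Re ζ ≥ exp^[k] (log N + π)` keeps every `X_m` above that threshold.
-/

open Real

lemma Real.le_iterate_exp (j : ℕ) (x : ℝ) : x ≤ exp^[j] x :=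
  Function.id_le_iterate_of_id_le
    (fun y => (le_add_of_nonneg_right zero_le_one).trans (add_one_le_exp y)) j x

def SectorBound (N X : ℝ) (w : ℂ) : Prop :=
  X ≤ w.re ∧ ‖w‖ ≤ N * X

lemma sectorBound_re_of_abs_im_le {N d : ℝ} {ζ : ℂ} (hN : 1 + d ≤ N) (hre : 0 ≤ ζ.re)
    (him : |ζ.im| ≤ d * ζ.re) : SectorBound N ζ.re ζ := by
  refine ⟨le_rfl, ?_⟩
  calc ‖ζ‖ ≤ |ζ.re| + |ζ.im| := Complex.norm_le_abs_re_add_abs_im ζ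
    _ ≤ (1 + d) * ζ.re := by rw [abs_of_nonneg hre]; linarith
    _ ≤ N * ζ.re := mul_le_mul_of_nonneg_right hN hre

namespace SectorBound

variable {N X : ℝ} {w : ℂ}

lemma log (hN : 2 ≤ N) (hX : Real.log N + π ≤ Real.log X) (h : SectorBound N X w) :
    SectorBound N (Real.log X) (Complex.log w) := by
  have hlogN : 0 ≤ Real.log N := Real.log_nonneg (by linarith)
  have hlogX : 0 < Real.log X := by linarith [pi_pos]
  have hw : X ≤ ‖w‖ := h.1.trans (Complex.re_le_norm w)
  have hX0 : 0 < X := by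
    have hnonneg : 0 ≤ X := by nlinarith [h.2]
    exact hnonneg.lt_of_ne (by rintro rfl; simp at hlogX)
  have hre : Real.log X ≤ (Complex.log w).re := by
    rw [Complex.log_re]; exact Real.log_le_log hX0 hw
  have hre_le : (Complex.log w).re ≤ Real.log N + Real.log X := by
    rw [Complex.log_re, ← Real.log_mul (by positivity) hX0.ne']
    exact Real.log_le_log (hX0.trans_le hw) h.2
  refine ⟨hre, ?_⟩
  calc ‖Complex.log w‖ ≤ |(Complex.log w).re| + |(Complex.log w).im| :=
        Complex.norm_le_abs_re_add_abs_im _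
    _ ≤ (Real.log N + Real.log X) + π := by
        rw [abs_of_nonneg (hlogX.le.trans hre), Complex.log_im]
        exact add_le_add hre_le (Complex.abs_arg_le_pi w)
    _ ≤ N * Real.log X := by nlinarith

lemma iterate_log (hN : 2 ≤ N) {j : ℕ} (hX : exp^[j] (Real.log N + π) ≤ X)
    (h : SectorBound N X w) (m : ℕ) (hm : m ≤ j) :
    exp^[j - m] (Real.log N + π) ≤ Real.log^[m] X ∧
      SectorBound N (Real.log^[m] X) (Complex.log^[m] w) := by
  induction m with
  | zero => exact ⟨hX, h⟩
  | succ m ih =>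
    obtain ⟨hthr, hsec⟩ := ih (by omega)
    have hthr' : exp^[j - (m + 1)] (Real.log N + π) ≤ Real.log (Real.log^[m] X) := by
      rw [show j - m = j - (m + 1) + 1 by omega, Function.iterate_succ_apply'] at hthr
      exact (le_log_iff_exp_le ((exp_pos _).trans_le hthr)).2 hthr
    rw [Function.iterate_succ_apply', Function.iterate_succ_apply']
    exact ⟨hthr', hsec.log hN ((le_iterate_exp _ _).trans hthr')⟩

end SectorBound

theorem iterated_complex_log_abs_upper_bound_general
    (k : ℕ) (d : ℝ) (hd : 0 < d) :
    ∃ N > (0 : ℝ), ∃ R : ℝ, Real.exp^[k] 0 < R ∧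
      ∀ ζ : ℂ, R ≤ ζ.re → |ζ.im| ≤ d * ζ.re →
        (∀ m < k, 0 < (Complex.log^[m] ζ).re) ∧
        ‖Complex.log^[k] ζ‖ ≤ N * Real.log^[k] ζ.re := by
  have hT : 0 < Real.log (2 + d) + π :=
    add_pos_of_nonneg_of_pos (Real.log_nonneg (by linarith)) pi_pos
  refine ⟨2 + d, by positivity, exp^[k] (Real.log (2 + d) + π),
    exp_strictMono.iterate k hT, fun ζ hR him => ?_⟩
  have hre : 0 < ζ.re := hT.trans_le ((le_iterate_exp k _).trans hR)
  have hiter := (sectorBound_re_of_abs_im_le (by linarith) hre.le him).iterate_log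
    (by linarith) hR
  refine ⟨fun m hm => ?_, (hiter k le_rfl).2.2⟩
  obtain ⟨hthr, hsec⟩ := hiter m hm.le
  exact (hT.trans_le ((le_iterate_exp _ _).trans hthr)).trans_le hsec.1

theorem iterated_complex_log_abs_upper_bound
    (k : ℕ) (hk : 1 ≤ k) (d : ℝ) (hd : 0 < d) :
    ∃ N > (0 : ℝ), ∃ R : ℝ, Real.exp^[k] 0 < R ∧
      ∀ ζ : ℂ, R ≤ ζ.re → |ζ.im| ≤ d * ζ.re →
        (∀ m < k, 0 < (Complex.log^[m] ζ).re) ∧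
        ‖Complex.log^[k] ζ‖ ≤ N * Real.log^[k] ζ.re :=
  iterated_complex_log_abs_upper_bound_general k d hd
end

section
/- Let β ∈ ℂ with Re(β) > 0 and Im(β) ≥ 0, let ε > 0, k ∈ ℕ, and t > exp^∘k(0) with M_{ε,k}(t) < Re(β). Let h : [t,∞) → ℝ be of class C¹ and nondecreasing, and suppose that either h'(x) → λ' as x → +∞ for some real λ' > Im(β)/Re(β), or h'(x) → +∞ as x → +∞. Then there exists t' ≥ t such that h(x + Re(β) − M_{ε,k}(x)) − h(x) ≥ Im(β) + M_{ε,k}(x) for all x ≥ t' (i.e. the restriction of h to [t',∞) is an upper map of type (β,ε,k)). -/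
open Filter Set

/-!
Eventually `h' ≥ c` for some slope `c` with `Im β < c · Re β`, so by the mean value theorem
`h(x + ρ⁻(x)) - h(x) ≥ c · (Re β - M(x))`. Since `M(x) → 0`, the right-hand side tends to
`c · Re β > Im β`, and thus eventually dominates `Im β + M(x)`.
-/

theorem tendsto_iterate_log_atTop (k : ℕ) : Tendsto (Real.log^[k]) atTop atTop := by
  induction k with
  | zero => exact tendsto_id
  | succ n ih =>
    rw [Function.iterate_succ']
    exact Real.tendsto_log_atTop.comp ih

theorem tendsto_Mfun_atTop_zero {ε : ℝ} (hε : -1 < ε) (k : ℕ) :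
    Tendsto (Mfun ε k) atTop (nhds 0) := by
  have hlast : Tendsto (fun x => (Real.log^[k] x) ^ (-(1 + ε))) atTop (nhds 0) :=
    (tendsto_rpow_neg_atTop (by linarith)).comp (tendsto_iterate_log_atTop k)
  have hone : ∀ᶠ x in atTop, ∀ j ∈ Finset.range (k + 1), 1 ≤ Real.log^[j] x :=
    (Finset.eventually_all _).2 fun j _ => (tendsto_iterate_log_atTop j).eventually_ge_atTop 1
  have hbounds : ∀ᶠ x in atTop,
      0 ≤ Mfun ε k x ∧ Mfun ε k x ≤ (Real.log^[k] x) ^ (-(1 + ε)) := by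
    filter_upwards [hone] with x hx
    have hprod : 1 ≤ ∏ j ∈ Finset.range k, Real.log^[j] x :=
      Finset.one_le_prod fun j hj =>
        hx j (Finset.mem_range.2 (Nat.lt_succ_of_lt (Finset.mem_range.1 hj)))
    have hpow : 0 ≤ (Real.log^[k] x) ^ (-(1 + ε)) :=
      Real.rpow_nonneg (zero_le_one.trans (hx k (Finset.self_mem_range_succ k))) _
    exact ⟨mul_nonneg (inv_nonneg.2 (zero_le_one.trans hprod)) hpow,
      mul_le_of_le_one_left hpow (inv_le_one_of_one_le₀ hprod)⟩
  exact tendsto_of_tendsto_of_tendsto_of_le_of_le' tendsto_const_nhds hlast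
    (hbounds.mono fun _ => And.left) (hbounds.mono fun _ => And.right)

theorem exists_lt_eventually_le {α : Type*} {l : Filter α} {f : α → ℝ} {r : ℝ}
    (hf : (∃ lam, r < lam ∧ Tendsto f l (nhds lam)) ∨ Tendsto f l atTop) :
    ∃ c, r < c ∧ ∀ᶠ y in l, c ≤ f y := by
  rcases hf with ⟨lam, hr, hlam⟩ | htop
  · obtain ⟨c, hrc, hc⟩ := exists_between hr
    exact ⟨c, hrc, (hlam.eventually (eventually_gt_nhds hc)).mono fun _ hy => hy.le⟩
  · exact ⟨r + 1, lt_add_one r, htop.eventually_ge_atTop _⟩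

theorem mul_sub_le_sub_of_le_derivWithin_Ici {h : ℝ → ℝ} {t a c : ℝ}
    (hd : DifferentiableOn ℝ h (Ici t)) (hta : t ≤ a)
    (hc : ∀ y ∈ Ioi a, c ≤ derivWithin h (Ici t) y) {x y : ℝ} (hx : a ≤ x) (hxy : x ≤ y) :
    c * (y - x) ≤ h y - h x := by
  have hnhds : ∀ z ∈ Ioi a, Ici t ∈ nhds z := fun z hz => Ici_mem_nhds (hta.trans_lt hz)
  refine (convex_Ici a).mul_sub_le_image_sub_of_le_deriv
    (hd.continuousOn.mono (Ici_subset_Ici.2 hta)) ?_ ?_ x hx y (hx.trans hxy) hxy <;>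
    rw [interior_Ici]
  · exact fun z hz => ((hd z (mem_Ici.2 (hta.trans hz.le))).differentiableAt
      (hnhds z hz)).differentiableWithinAt
  · intro z hz
    rw [← derivWithin_of_mem_nhds (hnhds z hz)]
    exact hc z hz

theorem upper_map_from_derivative_limit_general
    (β : ℂ) (hβre : 0 < β.re)
    (ε : ℝ) (hε : 0 < ε) (k : ℕ)
    (t : ℝ)
    (h : ℝ → ℝ) (hC : ContDiffOn ℝ 1 h (Set.Ici t))
    (hlim : (∃ lam : ℝ, β.im / β.re < lam ∧
              Tendsto (derivWithin h (Set.Ici t)) atTop (nhds lam)) ∨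
            Tendsto (derivWithin h (Set.Ici t)) atTop atTop) :
    ∃ t' : ℝ, t ≤ t' ∧
      ∀ x, t' ≤ x → β.im + Mfun ε k x ≤ h (x + (β.re - Mfun ε k x)) - h x := by
  obtain ⟨c, hc, hderiv⟩ := exists_lt_eventually_le hlim
  have hcre : β.im < c * β.re := (div_lt_iff₀ hβre).1 hc
  have hM := tendsto_Mfun_atTop_zero (by linarith : -1 < ε) k
  have hρ : ∀ᶠ x in atTop, 0 ≤ β.re - Mfun ε k x :=
    (tendsto_const_nhds.sub hM).eventually
      (eventually_ge_nhds (by rwa [sub_zero]))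
  have hgap : ∀ᶠ x in atTop, β.im + Mfun ε k x ≤ c * (β.re - Mfun ε k x) :=
    ((tendsto_const_nhds.mul (tendsto_const_nhds.sub hM)).sub
      (tendsto_const_nhds.add hM)).eventually (eventually_ge_nhds (by simpa using hcre)) |>.mono
      fun _ hx => sub_nonneg.1 hx
  obtain ⟨T, hT⟩ := eventually_atTop.1 (hderiv.and (hρ.and hgap))
  refine ⟨max t T, le_max_left t T, fun x hx => ?_⟩
  obtain ⟨-, hρx, hgapx⟩ := hT x ((le_max_right t T).trans hx)
  calc β.im + Mfun ε k x ≤ c * (β.re - Mfun ε k x) := hgapx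
    _ = c * (x + (β.re - Mfun ε k x) - x) := by ring
    _ ≤ h (x + (β.re - Mfun ε k x)) - h x :=
      mul_sub_le_sub_of_le_derivWithin_Ici (hC.differentiableOn one_ne_zero) (le_max_left t T)
        (fun y hy => (hT y ((le_max_right t T).trans (le_of_lt hy))).1) hx (by linarith)

theorem upper_map_from_derivative_limit
    (β : ℂ) (hβre : 0 < β.re) (hβim : 0 ≤ β.im)
    (ε : ℝ) (hε : 0 < ε) (k : ℕ)
    (t : ℝ) (ht : Real.exp^[k] 0 < t) (hMt : Mfun ε k t < β.re)
    (h : ℝ → ℝ) (hC : ContDiffOn ℝ 1 h (Set.Ici t))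
    (hmono : MonotoneOn h (Set.Ici t))
    (hlim : (∃ lam : ℝ, β.im / β.re < lam ∧
              Tendsto (derivWithin h (Set.Ici t)) atTop (nhds lam)) ∨
            Tendsto (derivWithin h (Set.Ici t)) atTop atTop) :
    ∃ t' : ℝ, t ≤ t' ∧
      ∀ x, t' ≤ x → β.im + Mfun ε k x ≤ h (x + (β.re - Mfun ε k x)) - h x :=
  upper_map_from_derivative_limit_general β hβre ε hε k t h hC hlim
end

section
/- Let β ∈ ℝ with β > 0, let δ > 0, ε > 0 and k ∈ ℕ. Then there exists t > exp^∘k(0) with M_{ε,k}(t) < β such that the function h(x) := (log x)^{δ} satisfies h(x + β − M_{ε,k}(x)) − h(x) ≥ M_{ε,k}(x) for all x ≥ t (i.e. the restriction of h to [t,∞) is an upper map of type (β,ε,k) for real β). -/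
/-!
For `k ≥ 1` the recursion `M_{ε,k+1}(x) = x⁻¹ M_{ε,k}(log x)` together with `M_{ε,k}(x) ≤ x⁻¹`
gives `M_{ε,k}(x) ≤ (x log x)⁻¹` for large `x`; for `k = 0` this is `log x ≤ x^ε`. On the other
hand, writing `(log y)^δ = exp (δ log log y)` and using `exp u ≥ 1 + u` and
`log b - log a ≥ (b - a)/b`, the increment of `(log x)^δ` over a step of length `c ≤ x` is at least
`δ c (log x)^δ / (4 x log x)`, which beats `(x log x)⁻¹` as soon as `δ c (log x)^δ ≥ 4`.
-/

open Filter Set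

open Real

lemma sub_div_le_log_sub_log {a b : ℝ} (ha : 0 < a) (hb : 0 < b) :
    (b - a) / b ≤ log b - log a := by
  have h := one_sub_inv_le_log_of_pos (div_pos hb ha)
  rwa [inv_div, log_div hb.ne' ha.ne', one_sub_div hb.ne'] at h

lemma mul_rpow_mul_sub_div_le_rpow_sub_rpow {a b δ : ℝ} (ha : 0 < a) (hb : 0 < b)
    (hδ : 0 ≤ δ) : δ * a ^ δ * ((b - a) / b) ≤ b ^ δ - a ^ δ := by
  have hsplit : b ^ δ = a ^ δ * exp (δ * (log b - log a)) := by
    rw [rpow_def_of_pos ha, rpow_def_of_pos hb, ← exp_add]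
    ring_nf
  have hexp := add_one_le_exp (δ * (log b - log a))
  have hlog := mul_le_mul_of_nonneg_left (sub_div_le_log_sub_log ha hb) hδ
  have hpos := rpow_pos_of_pos ha δ
  rw [hsplit]
  nlinarith

lemma le_log_add_rpow_sub_log_rpow {x c δ : ℝ} (hc : 0 < c) (hcx : c ≤ x)
    (hlog : 1 ≤ log x) (hδ : 0 ≤ δ) :
    δ * c * log x ^ δ / (4 * (x * log x)) ≤ log (x + c) ^ δ - log x ^ δ := by
  have hx : 0 < x := hc.trans_le hcx
  have hlx : 0 < log x := one_pos.trans_le hlog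
  have hlxc : log x < log (x + c) := log_lt_log hx (by linarith)
  have hstep : c / (2 * x) ≤ log (x + c) - log x := by
    calc c / (2 * x) ≤ ((x + c) - x) / (x + c) := by
          rw [add_sub_cancel_left]; gcongr; linarith
      _ ≤ _ := sub_div_le_log_sub_log hx (by linarith)
  have hlog_le : log (x + c) ≤ 2 * log x := by
    calc log (x + c) ≤ log (2 * x) := log_le_log (by linarith) (by linarith)
      _ = log 2 + log x := log_mul two_ne_zero hx.ne'
      _ ≤ 2 * log x := by linarith [log_le_sub_one_of_pos two_pos]
  calc δ * c * log x ^ δ / (4 * (x * log x))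
      = δ * log x ^ δ * (c / (2 * x) / (2 * log x)) := by field_simp; ring
    _ ≤ δ * log x ^ δ * ((log (x + c) - log x) / log (x + c)) := by
        gcongr
        exact hlx.trans hlxc
    _ ≤ _ := mul_rpow_mul_sub_div_le_rpow_sub_rpow hlx (hlx.trans hlxc) hδ

lemma Mfun_zero (ε x : ℝ) : Mfun ε 0 x = x ^ (-(1 + ε)) := by
  simp [Mfun]

lemma Mfun_succ (ε : ℝ) (k : ℕ) (x : ℝ) :
    Mfun ε (k + 1) x = x⁻¹ * Mfun ε k (log x) := by
  simp only [Mfun, Finset.prod_range_succ', Function.iterate_succ_apply,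
    Function.iterate_zero_apply, mul_inv]
  ring

lemma eventually_Mfun_le_inv {ε : ℝ} (hε : 0 ≤ ε) (k : ℕ) :
    ∀ᶠ x in atTop, Mfun ε k x ≤ x⁻¹ := by
  induction k with
  | zero =>
    filter_upwards [eventually_ge_atTop 1] with x hx
    rw [Mfun_zero, ← rpow_neg_one]
    exact rpow_le_rpow_of_exponent_le hx (by linarith)
  | succ k ih =>
    filter_upwards [tendsto_log_atTop.eventually ih, tendsto_log_atTop.eventually_ge_atTop 1,
      eventually_gt_atTop 0] with x hM hlog hx
    calc Mfun ε (k + 1) x ≤ x⁻¹ * (log x)⁻¹ := by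
          rw [Mfun_succ]; exact mul_le_mul_of_nonneg_left hM (inv_nonneg.2 hx.le)
      _ ≤ x⁻¹ := mul_le_of_le_one_right (inv_nonneg.2 hx.le) (inv_le_one_of_one_le₀ hlog)

lemma eventually_Mfun_le_inv_mul_log {ε : ℝ} (hε : 0 < ε) (k : ℕ) :
    ∀ᶠ x in atTop, Mfun ε k x ≤ (x * log x)⁻¹ := by
  cases k with
  | zero =>
    filter_upwards [(isLittleO_log_rpow_atTop hε).bound one_pos, eventually_gt_atTop 1]
      with x hbound hx
    have hx0 : 0 < x := one_pos.trans hx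
    have hlx : 0 < log x := log_pos hx
    rw [norm_of_nonneg hlx.le, norm_of_nonneg (rpow_pos_of_pos hx0 ε).le, one_mul] at hbound
    calc Mfun ε 0 x = (x * x ^ ε)⁻¹ := by
          rw [Mfun_zero, neg_add, rpow_add hx0, rpow_neg_one, rpow_neg hx0.le, mul_inv]
      _ ≤ (x * log x)⁻¹ := by gcongr
  | succ k =>
    filter_upwards [tendsto_log_atTop.eventually (eventually_Mfun_le_inv hε.le k),
      eventually_gt_atTop 0] with x hM hx
    rw [Mfun_succ, mul_inv]
    exact mul_le_mul_of_nonneg_left hM (inv_nonneg.2 hx.le)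

lemma eventually_Mfun_le_log_rpow_add_sub_log_rpow {c δ ε : ℝ} (hc : 0 < c) (hδ : 0 < δ)
    (hε : 0 < ε) (k : ℕ) :
    ∀ᶠ x in atTop, Mfun ε k x ≤ log (x + c) ^ δ - log x ^ δ := by
  have hgrowth : ∀ᶠ x in atTop, 4 / (δ * c) ≤ log x ^ δ :=
    ((tendsto_rpow_atTop hδ).comp tendsto_log_atTop).eventually_ge_atTop _
  filter_upwards [eventually_Mfun_le_inv_mul_log hε k, hgrowth, eventually_ge_atTop c,
    tendsto_log_atTop.eventually_ge_atTop 1] with x hM hgrow hcx hlog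
  have hxlog : 0 < x * log x := mul_pos (hc.trans_le hcx) (one_pos.trans_le hlog)
  calc Mfun ε k x ≤ (x * log x)⁻¹ := hM
    _ ≤ δ * c * log x ^ δ / (4 * (x * log x)) := by
        rw [inv_eq_one_div, div_le_div_iff₀ hxlog (by positivity)]
        rw [div_le_iff₀ (by positivity)] at hgrow
        nlinarith
    _ ≤ _ := le_log_add_rpow_sub_log_rpow hc hcx hlog hδ.le

theorem logarithmic_power_is_upper_map
    (β : ℝ) (hβ : 0 < β) (δ : ℝ) (hδ : 0 < δ) (ε : ℝ) (hε : 0 < ε) (k : ℕ) :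
    ∃ t : ℝ, Real.exp^[k] 0 < t ∧ Mfun ε k t < β ∧
      ∀ x, t ≤ x →
        Mfun ε k x ≤
          Real.log (x + (β - Mfun ε k x)) ^ δ - Real.log x ^ δ := by
  have hsmall : ∀ᶠ x in atTop, Mfun ε k x ≤ β / 2 := by
    filter_upwards [eventually_Mfun_le_inv hε.le k, eventually_ge_atTop (2 / β)] with x hM hx
    exact hM.trans (by simpa using inv_anti₀ (by positivity) hx)
  have hkey : ∀ᶠ x in atTop, Mfun ε k x ≤ β / 2 ∧
      Mfun ε k x ≤ log (x + (β - Mfun ε k x)) ^ δ - log x ^ δ := by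
    filter_upwards [hsmall, eventually_Mfun_le_log_rpow_add_sub_log_rpow (half_pos hβ) hδ hε k,
      eventually_gt_atTop 1] with x hM hinc hx
    refine ⟨hM, hinc.trans (sub_le_sub_right ?_ _)⟩
    gcongr
    · exact log_nonneg (by linarith)
    · linarith
  obtain ⟨t₀, ht₀⟩ := eventually_atTop.mp hkey
  refine ⟨max t₀ (exp^[k] 0 + 1), by linarith [le_max_right t₀ (exp^[k] 0 + 1)],
    (ht₀ _ (le_max_left _ _)).1.trans_lt (half_lt_self hβ),
    fun x hx => (ht₀ x ((le_max_left _ _).trans hx)).2⟩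
end
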